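/- arXiv:2410.07904 — 12 statements merged into one kernel-verified Lean document; each statement's English description precedes it below -/
import Mathlib

section
/- Let t0 be a real constant, h_bl : ℝ → ℝ continuous, and let h : ℝ × ℝ → ℝ be continuously differentiable and satisfy the lamella kinematic equation ∂h/∂t + (r/(t+t0))·∂h/∂r = −(2/(t+t0))·(h(r,t) − h_bl(t)) for all (r,t) with t ∈ I, where I is an open interval on which t + t0 > 0. Let R : I → ℝ be differentiable with R(t) ≥ 0, let V_tot be a constant, and define V(t) = V_tot − 2π·∫_0^{R(t)} r·h(r,t) dr. Then V is differentiable on I with V'(t) = 2π·R(t)·[ (R(t)/(t+t0))·(h(R(t),t) − h_bl(t)) − R'(t)·h(R(t),t) ]. -/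
/-!
By the Leibniz rule for a moving upper limit,
`V' = -2π (∫₀^R r ∂ₜh dr + R' R h(R,t))`. Multiplied by `r`, the kinematic equation is in
conservative form, `r ∂ₜh + (t+t0)⁻¹ ∂ᵣ(r² h) = 2 (t+t0)⁻¹ h_bl r`, so the remaining integral is
`R² (h_bl - h(R,t)) / (t+t0)`.

The Leibniz rule itself comes from splitting `∫ₐ^{u s}` at `u t`: the fixed part is differentiated
under the integral sign, and the moving part equals `(u s - u t) (F t (u t) + o(1))` by continuity
of `F` at `(t, u t)`.
-/

open Real Filter Topology Set MeasureTheory intervalIntegral Function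

section Leibniz

variable {E : Type*} [NormedAddCommGroup E] [NormedSpace ℝ E]

theorem hasDerivAt_intervalIntegral_of_continuous_deriv {F F' : ℝ → ℝ → E} {a b t : ℝ}
    (hF : ∀ s, Continuous (F s)) (hF' : Continuous (uncurry F'))
    (hderiv : ∀ s r, HasDerivAt (F · r) (F' s r) s) :
    HasDerivAt (fun s => ∫ r in a..b, F s r) (∫ r in a..b, F' t r) t := by
  obtain ⟨C, hC⟩ := ((isCompact_closedBall t 1).prod (isCompact_uIcc (a := a) (b := b))
    ).exists_bound_of_continuousOn hF'.continuousOn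
  refine (hasDerivAt_integral_of_dominated_loc_of_deriv_le (bound := fun _ => C)
    (Metric.ball_mem_nhds t one_pos) (.of_forall fun s => (hF s).aestronglyMeasurable)
    ((hF t).intervalIntegrable _ _)
    (hF'.comp (continuous_const.prodMk continuous_id)).aestronglyMeasurable ?_
    intervalIntegrable_const (.of_forall fun r _ s _ => hderiv s r)).2
  exact .of_forall fun r hr s hs =>
    hC (s, r) ⟨Metric.ball_subset_closedBall hs, uIoc_subset_uIcc hr⟩

theorem hasDerivAt_intervalIntegral_moving_upper_limit [CompleteSpace E] {F : ℝ → ℝ → E}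
    {u : ℝ → ℝ} {u' t : ℝ} (hu : HasDerivAt u u' t) (hF : ContinuousAt (uncurry F) (t, u t))
    (hint : ∀ᶠ s in 𝓝 t, IntervalIntegrable (F s) volume (u t) (u s)) :
    HasDerivAt (fun s => ∫ r in u t..u s, F s r) (u' • F t (u t)) t := by
  set c := F t (u t)
  have herr : (fun s => (∫ r in u t..u s, F s r) - (u s - u t) • c) =o[𝓝 t]
      (fun s => u s - u t) := by
    refine Asymptotics.isLittleO_iff.2 fun ε hε => ?_
    obtain ⟨δ, hδ, hball⟩ := Metric.continuousAt_iff.1 hF ε hε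
    have hu_near : ∀ᶠ s in 𝓝 t, dist (u s) (u t) < δ :=
      Metric.tendsto_nhds.1 hu.continuousAt δ hδ
    filter_upwards [hint, hu_near, Metric.ball_mem_nhds t hδ] with s hs_int hus hst
    have hbound : ∀ r ∈ uIoc (u t) (u s), ‖F s r - c‖ ≤ ε := by
      intro r hr
      rw [← dist_eq_norm]
      refine (hball (x := (s, r)) ?_).le
      rw [Prod.dist_eq, max_lt_iff]
      refine ⟨hst, lt_of_le_of_lt ?_ hus⟩
      simpa only [Real.dist_eq] using abs_sub_left_of_mem_uIcc (uIoc_subset_uIcc hr)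
    have := norm_integral_le_of_norm_le_const hbound
    rwa [integral_sub hs_int intervalIntegrable_const, intervalIntegral.integral_const,
      ← Real.norm_eq_abs] at this
  have hzero : HasDerivAt (fun s => (∫ r in u t..u s, F s r) - (u s - u t) • c) 0 t := by
    refine hasDerivAt_iff_isLittleO.2 ((herr.trans_isBigO hu.isBigO_sub).congr_left fun s => ?_)
    simp
  simpa using (hzero.add ((hu.sub_const (u t)).smul_const c)).congr_of_eventuallyEq
    (.of_forall fun s => (sub_add_cancel _ _).symm)

theorem hasDerivAt_intervalIntegral_leibniz [CompleteSpace E] {F F' : ℝ → ℝ → E} {u : ℝ → ℝ}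
    {a u' t : ℝ} (hF : Continuous (uncurry F)) (hF' : Continuous (uncurry F'))
    (hderiv : ∀ s r, HasDerivAt (F · r) (F' s r) s) (hu : HasDerivAt u u' t) :
    HasDerivAt (fun s => ∫ r in a..u s, F s r)
      ((∫ r in a..u t, F' t r) + u' • F t (u t)) t := by
  have hFs : ∀ s, Continuous (F s) := fun s => hF.comp (continuous_const.prodMk continuous_id)
  have hsplit : (fun s => ∫ r in a..u s, F s r) =
      fun s => (∫ r in a..u t, F s r) + ∫ r in u t..u s, F s r :=
    funext fun s => (integral_add_adjacent_intervals ((hFs s).intervalIntegrable _ _)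
      ((hFs s).intervalIntegrable _ _)).symm
  rw [hsplit]
  exact (hasDerivAt_intervalIntegral_of_continuous_deriv hFs hF' hderiv).add
    (hasDerivAt_intervalIntegral_moving_upper_limit hu hF.continuousAt
      (.of_forall fun s => (hFs s).intervalIntegrable _ _))

end Leibniz

section PartialDeriv

variable {E : Type*} [NormedAddCommGroup E] [NormedSpace ℝ E] {f : ℝ → ℝ → E}

theorem ContDiff.hasDerivAt_uncurry_right (hf : ContDiff ℝ 1 (uncurry f)) (r s : ℝ) :
    HasDerivAt (f r) (fderiv ℝ (uncurry f) (r, s) (0, 1)) s :=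
  ((hf.differentiable one_ne_zero) (r, s)).hasFDerivAt.comp_hasDerivAt s
    ((hasDerivAt_const s r).prodMk (hasDerivAt_id s))

theorem ContDiff.continuous_deriv_uncurry_right (hf : ContDiff ℝ 1 (uncurry f)) :
    Continuous fun p : ℝ × ℝ => deriv (f p.1) p.2 := by
  simp_rw [(hf.hasDerivAt_uncurry_right _ _).deriv]
  exact (hf.continuous_fderiv one_ne_zero).clm_apply continuous_const

theorem ContDiff.uncurry_flip (hf : ContDiff ℝ 1 (uncurry f)) :
    ContDiff ℝ 1 (uncurry (flip f)) :=
  hf.comp (contDiff_snd.prodMk contDiff_fst)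

theorem ContDiff.differentiableAt_uncurry_left (hf : ContDiff ℝ 1 (uncurry f)) (r s : ℝ) :
    DifferentiableAt ℝ (f · s) r :=
  (hf.uncurry_flip.hasDerivAt_uncurry_right s r).differentiableAt

theorem ContDiff.continuous_deriv_uncurry_left (hf : ContDiff ℝ 1 (uncurry f)) :
    Continuous fun p : ℝ × ℝ => deriv (f · p.2) p.1 :=
  hf.uncurry_flip.continuous_deriv_uncurry_right.comp continuous_swap

end PartialDeriv

theorem integral_mul_deriv_eq_of_lamella {h : ℝ → ℝ → ℝ} (hC1 : ContDiff ℝ 1 (uncurry h))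
    {t τ hb : ℝ} (hτ : τ ≠ 0)
    (hPDE : ∀ r : ℝ, deriv (fun s => h r s) t + (r / τ) * deriv (fun x => h x t) r
        = -(2 / τ) * (h r t - hb)) (a : ℝ) :
    ∫ r in (0:ℝ)..a, r * deriv (fun s => h r s) t = a ^ 2 / τ * (hb - h a t) := by
  have hflux : ∀ r, HasDerivAt (fun x => x ^ 2 * h x t)
      (2 * r * h r t + r ^ 2 * deriv (fun x => h x t) r) r := fun r => by
    refine ((hasDerivAt_pow 2 r).mul
      (hC1.differentiableAt_uncurry_left r t).hasDerivAt).congr_deriv ?_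
    ring
  have hflux_cont : Continuous fun r => 2 * r * h r t + r ^ 2 * deriv (fun x => h x t) r := by
    have hh := hC1.continuous
    have hhr := hC1.continuous_deriv_uncurry_left
    fun_prop
  have hconservative : ∀ r, r * deriv (fun s => h r s) t
      = 2 * hb / τ * r - (2 * r * h r t + r ^ 2 * deriv (fun x => h x t) r) / τ :=
    fun r => by linear_combination r * hPDE r
  simp_rw [hconservative]
  rw [integral_sub ((continuous_const_mul _).intervalIntegrable _ _)
      ((hflux_cont.div_const τ).intervalIntegrable _ _),
    intervalIntegral.integral_const_mul, intervalIntegral.integral_div,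
    integral_eq_sub_of_hasDerivAt (fun r _ => hflux r) (hflux_cont.intervalIntegrable _ _),
    integral_id]
  field_simp
  ring

theorem rim_volume_derivative_general
    (t0 A B V_tot : ℝ) (h_bl : ℝ → ℝ)
    (hpos : ∀ t ∈ Set.Ioo A B, t + t0 > 0)
    (h : ℝ → ℝ → ℝ) (hC1 : ContDiff ℝ 1 (Function.uncurry h))
    (hPDE : ∀ r : ℝ, ∀ t ∈ Set.Ioo A B,
      deriv (fun s => h r s) t + (r / (t + t0)) * deriv (fun x => h x t) r
        = -(2 / (t + t0)) * (h r t - h_bl t))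
    (R : ℝ → ℝ)
    (hR : ∀ t ∈ Set.Ioo A B, DifferentiableAt ℝ R t) :
    ∀ t ∈ Set.Ioo A B,
      HasDerivAt (fun s : ℝ => V_tot - 2 * π * ∫ r in (0:ℝ)..R s, r * h r s)
        (2 * π * R t *
          ((R t / (t + t0)) * (h (R t) t - h_bl t) - deriv R t * h (R t) t)) t := by
  intro t ht
  have hF : Continuous (uncurry fun s r => r * h r s) :=
    continuous_snd.mul (hC1.continuous.comp continuous_swap)
  have hF' : Continuous (uncurry fun s r => r * deriv (fun s => h r s) s) :=
    continuous_snd.mul (hC1.continuous_deriv_uncurry_right.comp continuous_swap)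
  have hleibniz := hasDerivAt_intervalIntegral_leibniz (a := 0) hF hF'
    (fun s r => (hC1.hasDerivAt_uncurry_right r s).differentiableAt.hasDerivAt.const_mul r)
    (hR t ht).hasDerivAt
  rw [integral_mul_deriv_eq_of_lamella hC1 (hpos t ht).ne' (fun r => hPDE r t ht)] at hleibniz
  refine ((hleibniz.const_mul (2 * π)).const_sub V_tot).congr_deriv ?_
  rw [smul_eq_mul]
  ring

/-- If `h(r,t)` is a `C¹` solution of the lamella kinematic PDE
`∂h/∂t + (r/(t+t0))·∂h/∂r = −(2/(t+t0))·(h − h_bl(t))` on an open interval `I` where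
`t + t0 > 0`, and `R` is differentiable and nonnegative on `I`, then the rim volume
`V(t) = V_tot − 2π ∫_0^{R(t)} r·h(r,t) dr` is differentiable on `I` with
`V'(t) = 2π·R·[(R/(t+t0))·(h(R,t) − h_bl(t)) − R'·h(R,t)]`. -/
theorem rim_volume_derivative
    (t0 A B V_tot : ℝ) (h_bl : ℝ → ℝ) (hbl_cont : Continuous h_bl)
    (hpos : ∀ t ∈ Set.Ioo A B, t + t0 > 0)
    (h : ℝ → ℝ → ℝ) (hC1 : ContDiff ℝ 1 (Function.uncurry h))
    (hPDE : ∀ r : ℝ, ∀ t ∈ Set.Ioo A B,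
      deriv (fun s => h r s) t + (r / (t + t0)) * deriv (fun x => h x t) r
        = -(2 / (t + t0)) * (h r t - h_bl t))
    (R : ℝ → ℝ)
    (hR : ∀ t ∈ Set.Ioo A B, DifferentiableAt ℝ R t)
    (hRnn : ∀ t ∈ Set.Ioo A B, R t ≥ 0) :
    ∀ t ∈ Set.Ioo A B,
      HasDerivAt (fun s : ℝ => V_tot - 2 * π * ∫ r in (0:ℝ)..R s, r * h r s)
        (2 * π * R t *
          ((R t / (t + t0)) * (h (R t) t - h_bl t) - deriv R t * h (R t) t)) t :=
  rim_volume_derivative_general t0 A B V_tot h_bl hpos h hC1 hPDE R hR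
end

section
/- Let t0 be a real constant and h_bl : I → ℝ continuous on an open interval I on which t + t0 > 0. Suppose R, U, V, h : I → ℝ are differentiable and satisfy R'(t) = U(t), h'(t) = −(2/(t+t0))·(h(t) − h_bl(t)), and V'(t) = 2π·R(t)·h(t)·(ū(t) − U(t)), where ū(t) = (R(t)/(t+t0))·(1 − h_bl(t)/h(t)) and h(t) ≠ 0 on I. Then the total volume V(t) + π·R(t)²·h(t) is constant on I. -/
open Real

/-! The rim gains volume at rate `2πRh(ū − U)` and the lamella `πR²h` changes at rate
`2πRUh + πR²h'`; with `h·ū = R(h − h_bl)/(t+t0)` and `h' = −2(h − h_bl)/(t+t0)` the two rates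
cancel, so the total volume has zero derivative on the interval. -/

theorem rim_flux_add_lamella_flux_eq_zero (R U h b c : ℝ) (hh : h ≠ 0) :
    2 * π * R * h * ((R / c) * (1 - b / h) - U)
      + (π * (2 * R * U) * h + π * R ^ 2 * (-(2 / c) * (h - b))) = 0 := by
  have h_mul_one_sub : h * (1 - b / h) = h - b := by
    rw [mul_sub, mul_one, mul_div_cancel₀ b hh]
  linear_combination 2 * π * R * (R / c) * h_mul_one_sub

theorem hasDerivAt_total_volume {R V h : ℝ → ℝ} {U b c t : ℝ} (hne : h t ≠ 0)
    (hR : HasDerivAt R U t) (hh : HasDerivAt h (-(2 / c) * (h t - b)) t)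
    (hV : HasDerivAt V (2 * π * R t * h t * ((R t / c) * (1 - b / h t) - U)) t) :
    HasDerivAt (fun τ => V τ + π * R τ ^ 2 * h τ) 0 t := by
  have hlamella : HasDerivAt (fun τ => π * R τ ^ 2 * h τ)
      (π * (2 * R t * U) * h t + π * R t ^ 2 * (-(2 / c) * (h t - b))) t :=
    (((hR.pow 2).const_mul π).mul hh).congr_deriv (by simp)
  exact (hV.add hlamella).congr_deriv (rim_flux_add_lamella_flux_eq_zero _ _ _ _ _ hne)

theorem total_volume_conserved_general
    (t0 A B : ℝ) (h_bl : ℝ → ℝ)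
    (R U V h : ℝ → ℝ)
    (hne : ∀ t ∈ Set.Ioo A B, h t ≠ 0)
    (hR : ∀ t ∈ Set.Ioo A B, HasDerivAt R (U t) t)
    (hh : ∀ t ∈ Set.Ioo A B, HasDerivAt h (-(2 / (t + t0)) * (h t - h_bl t)) t)
    (hV : ∀ t ∈ Set.Ioo A B,
      HasDerivAt V
        (2 * π * R t * h t * ((R t / (t + t0)) * (1 - h_bl t / h t) - U t)) t) :
    ∀ s ∈ Set.Ioo A B, ∀ t ∈ Set.Ioo A B,
      V s + π * R s ^ 2 * h s = V t + π * R t ^ 2 * h t := by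
  have hderiv : ∀ t ∈ Set.Ioo A B, HasDerivAt (fun τ => V τ + π * R τ ^ 2 * h τ) 0 t :=
    fun t ht => hasDerivAt_total_volume (hne t ht) (hR t ht) (hh t ht) (hV t ht)
  intro s hs t ht
  exact isOpen_Ioo.is_const_of_deriv_eq_zero isPreconnected_Ioo
    (fun x hx => (hderiv x hx).differentiableAt.differentiableWithinAt)
    (fun x hx => (hderiv x hx).deriv) hs ht

/-- In the rim-lamella model, if `R' = U`,
`h' = −(2/(t+t0))·(h − h_bl)` and `V' = 2πRh·(ū − U)` with
`ū = (R/(t+t0))·(1 − h_bl/h)` on an open interval `I` where `t + t0 > 0` and `h ≠ 0`,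
then the total volume `V + πR²h` is constant on `I`. -/
theorem total_volume_conserved
    (t0 A B : ℝ) (h_bl : ℝ → ℝ) (hbl_cont : Continuous h_bl)
    (hpos : ∀ t ∈ Set.Ioo A B, t + t0 > 0)
    (R U V h : ℝ → ℝ)
    (hne : ∀ t ∈ Set.Ioo A B, h t ≠ 0)
    (hR : ∀ t ∈ Set.Ioo A B, HasDerivAt R (U t) t)
    (hh : ∀ t ∈ Set.Ioo A B, HasDerivAt h (-(2 / (t + t0)) * (h t - h_bl t)) t)
    (hV : ∀ t ∈ Set.Ioo A B,
      HasDerivAt V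
        (2 * π * R t * h t * ((R t / (t + t0)) * (1 - h_bl t / h t) - U t)) t) :
    ∀ s ∈ Set.Ioo A B, ∀ t ∈ Set.Ioo A B,
      V s + π * R s ^ 2 * h s = V t + π * R t ^ 2 * h t :=
  total_volume_conserved_general t0 A B h_bl R U V h hne hR hh hV
end

section
/- Consider the dimensionless regularized rim-lamella system on an interval I on which t + t0 > 0, t + t1 > 0, h(t) > 0 and V(t) > 0. Then the velocity defect Δ(t) = ū(t) − U(t) is differentiable and satisfies Δ'(t) + (Δ(t)/(t+t0))·(1 − h_bl(t)/h(t)) = −(2π·R(t)·h(t)/V(t))·(Δ(t)² − c(t)²) − (R(t)/(t+t0)²)·(h_bl(t)/h(t))·Φ(t), where Φ(t) = 3·(1 − h_bl(t)/h(t)) + (1/2)·(t+t0)/(t+t1) and c(t)² = (1 − cos θ)/(We·h(t)). -/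
open Real

/-!
Write `r = h_bl / h`. Since `h_bl' = h_bl / (2(t+t1))` and `h` relaxes towards `h_bl` at rate
`2/(t+t0)`, the ratio obeys the closed equation `r' = r·(1/(2(t+t1)) + 2(1−r)/(t+t0))`.
Differentiating `ū = R(1−r)/(t+t0)` with `R' = U` then gives the purely kinematic identity
`ū' = (U − ū)(1−r)/(t+t0) − (R/(t+t0)²)·r·Φ`, and the momentum balance solved for `U'` is
`U' = (2πRh/V)(Δ² − c²)`; subtracting the two yields the equation for `Δ = ū − U`.
-/

theorem hasDerivAt_const_mul_sqrt_add {a c t : ℝ} (ht : 0 < t + c) :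
    HasDerivAt (fun s => a * √(s + c)) (1 / (2 * (t + c)) * (a * √(t + c))) t := by
  refine ((((hasDerivAt_id' t).add_const c).sqrt ht.ne').const_mul a).congr_deriv ?_
  have hs : √(t + c) ≠ 0 := (sqrt_pos.mpr ht).ne'
  field_simp
  rw [sq_sqrt ht.le]

theorem HasDerivAt.div_of_relaxation {f g : ℝ → ℝ} {p k t : ℝ}
    (hf : HasDerivAt f (p * f t) t) (hg : HasDerivAt g (-k * (g t - f t)) t) (hg0 : g t ≠ 0) :
    HasDerivAt (fun s => f s / g s) (f t / g t * (p + k * (1 - f t / g t))) t := by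
  refine (hf.div hg hg0).congr_deriv ?_
  field_simp
  ring

theorem hasDerivAt_lamella_velocity {R r : ℝ → ℝ} {t t0 t1 u : ℝ} (ht0 : t + t0 ≠ 0)
    (hR : HasDerivAt R u t)
    (hr : HasDerivAt r (r t * (1 / (2 * (t + t1)) + 2 / (t + t0) * (1 - r t))) t) :
    HasDerivAt (fun s => R s / (s + t0) * (1 - r s))
      ((u - R t / (t + t0) * (1 - r t)) * (1 - r t) / (t + t0)
        - R t / (t + t0) ^ 2 * r t * (3 * (1 - r t) + 1 / 2 * (t + t0) / (t + t1))) t := by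
  refine ((hR.div ((hasDerivAt_id' t).add_const t0) ht0).mul
    ((hasDerivAt_const t 1).sub hr)).congr_deriv ?_
  simp only [Pi.div_apply, Pi.sub_apply]
  field_simp
  ring

theorem eq_of_momentum_balance {V h R Δ k We U' : ℝ} (hV : V ≠ 0) (hh : h ≠ 0)
    (hmom : V * U' = 2 * π * R * h * Δ ^ 2 - 2 * π * R * k / We) :
    U' = 2 * π * R * h / V * (Δ ^ 2 - k / (We * h)) := by
  apply mul_left_cancel₀ hV
  rw [hmom, mul_comm We h, ← div_div]
  field_simp

theorem velocity_defect_equation_general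
    (We t0 t1 a θ A B : ℝ)
    (R U V h hbl ubar : ℝ → ℝ)
    (hbl_def : ∀ t, hbl t = a * Real.sqrt (t + t1))
    (hubar_def : ∀ t, ubar t = (R t / (t + t0)) * (1 - hbl t / h t))
    (hpos : ∀ t ∈ Set.Ioo A B, t + t0 > 0 ∧ t + t1 > 0 ∧ h t > 0 ∧ V t > 0)
    (hR : ∀ t ∈ Set.Ioo A B, HasDerivAt R (U t) t)
    (hh : ∀ t ∈ Set.Ioo A B, HasDerivAt h (-(2 / (t + t0)) * (h t - hbl t)) t)
    (hU : ∀ t ∈ Set.Ioo A B, DifferentiableAt ℝ U t)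
    (hmom : ∀ t ∈ Set.Ioo A B,
      V t * deriv U t
        = 2 * π * R t * h t * (ubar t - U t) ^ 2 - 2 * π * R t * (1 - Real.cos θ) / We) :
    ∀ t ∈ Set.Ioo A B,
      DifferentiableAt ℝ (fun s => ubar s - U s) t
      ∧ deriv (fun s => ubar s - U s) t
          + ((ubar t - U t) / (t + t0)) * (1 - hbl t / h t)
        = -(2 * π * R t * h t / V t)
              * ((ubar t - U t) ^ 2 - (1 - Real.cos θ) / (We * h t))
          - (R t / (t + t0) ^ 2) * (hbl t / h t)
              * (3 * (1 - hbl t / h t) + (1 / 2) * (t + t0) / (t + t1)) := by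
  intro t ht
  obtain ⟨ht0, ht1, hht, hVt⟩ := hpos t ht
  have hhbl : HasDerivAt hbl (1 / (2 * (t + t1)) * hbl t) t := by
    rw [funext hbl_def]
    exact hasDerivAt_const_mul_sqrt_add ht1
  have hratio := hhbl.div_of_relaxation (hh t ht) hht.ne'
  have hubar := hasDerivAt_lamella_velocity ht0.ne' (hR t ht) hratio
  rw [← funext hubar_def] at hubar
  have hΔ : HasDerivAt (fun s => ubar s - U s) _ t := hubar.sub (hU t ht).hasDerivAt
  refine ⟨hΔ.differentiableAt, ?_⟩
  rw [hΔ.deriv, eq_of_momentum_balance hVt.ne' hht.ne' (hmom t ht), ← hubar_def t]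
  ring

/-- In the dimensionless regularized rim-lamella system (Regime 1,
no slip), the velocity defect `Δ = ū − U` is differentiable and satisfies
`Δ' + (Δ/(t+t0))·(1 − h_bl/h) = −(2πRh/V)·(Δ² − c²) − (R/(t+t0)²)·(h_bl/h)·Φ`,
where `Φ = 3·(1 − h_bl/h) + (1/2)·(t+t0)/(t+t1)` and `c² = (1 − cos θ)/(We·h)`. -/
theorem velocity_defect_equation
    (We t0 t1 a θ A B : ℝ) (hWe : We > 0) (ha : a > 0)
    (R U V h hbl ubar : ℝ → ℝ)
    (hbl_def : ∀ t, hbl t = a * Real.sqrt (t + t1))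
    (hubar_def : ∀ t, ubar t = (R t / (t + t0)) * (1 - hbl t / h t))
    (hpos : ∀ t ∈ Set.Ioo A B, t + t0 > 0 ∧ t + t1 > 0 ∧ h t > 0 ∧ V t > 0)
    (hR : ∀ t ∈ Set.Ioo A B, HasDerivAt R (U t) t)
    (hh : ∀ t ∈ Set.Ioo A B, HasDerivAt h (-(2 / (t + t0)) * (h t - hbl t)) t)
    (hV : ∀ t ∈ Set.Ioo A B, HasDerivAt V (2 * π * R t * h t * (ubar t - U t)) t)
    (hU : ∀ t ∈ Set.Ioo A B, DifferentiableAt ℝ U t)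
    (hmom : ∀ t ∈ Set.Ioo A B,
      V t * deriv U t
        = 2 * π * R t * h t * (ubar t - U t) ^ 2 - 2 * π * R t * (1 - Real.cos θ) / We) :
    ∀ t ∈ Set.Ioo A B,
      DifferentiableAt ℝ (fun s => ubar s - U s) t
      ∧ deriv (fun s => ubar s - U s) t
          + ((ubar t - U t) / (t + t0)) * (1 - hbl t / h t)
        = -(2 * π * R t * h t / V t)
              * ((ubar t - U t) ^ 2 - (1 - Real.cos θ) / (We * h t))
          - (R t / (t + t0) ^ 2) * (hbl t / h t)
              * (3 * (1 - hbl t / h t) + (1 / 2) * (t + t0) / (t + t1)) :=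
  velocity_defect_equation_general We t0 t1 a θ A B R U V h hbl ubar hbl_def hubar_def hpos hR hh hU
    hmom
end

section
/- Let τ ≤ T, t0, t1 real with t + t0 > 0 and t + t1 > 0 on [τ, T], and let h, R, V, c, h_bl : [τ, T] → ℝ be continuous with h(t) > 0, V(t) > 0 on [τ, T], and h differentiable with h'(t) = −(2/(t+t0))·(h(t) − h_bl(t)). Suppose Y : [τ, T] → ℝ is differentiable and satisfies the differential inequality Y'(t) + (Y(t)/(t+t0))·(1 − h_bl(t)/h(t)) + (4π·R(t)·h(t)·c(t)/V(t))·Y(t) ≤ 0 on [τ, T]. Then for all t ∈ [τ, T], Y(t)/√(h(t)) ≤ (Y(τ)/√(h(τ)))·exp( −∫_τ^t 4π·R(s)·h(s)·c(s)/V(s) ds ). -/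
open Real Set MeasureTheory intervalIntegral

/-!
Since `h' = −(2/(t+t0))·(h − h_bl)`, the function `u = Y/√h` has derivative
`(Y' + (Y/(t+t0))·(1 − h_bl/h))/√h`, so the hypothesis says exactly `u' ≤ −g·u` with
`g = 4πRhc/V`. The linear Gronwall inequality then follows because `u·exp(∫_τ^t g)` has
nonpositive derivative, hence is antitone.
-/

theorem hasDerivAt_integral_of_continuousOn_Icc {g : ℝ → ℝ} {a b x : ℝ}
    (hg : ContinuousOn g (Icc a b)) (hx : x ∈ Ioo a b) :
    HasDerivAt (fun y => ∫ s in a..y, g s) (g x) x := by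
  have hint : IntervalIntegrable g volume a x := by
    refine ContinuousOn.intervalIntegrable (hg.mono ?_)
    rw [uIcc_of_le hx.1.le]
    exact Icc_subset_Icc_right hx.2.le
  exact integral_hasDerivAt_right hint
    ((hg.mono Ioo_subset_Icc_self).stronglyMeasurableAtFilter isOpen_Ioo x hx)
    ((hg x (Ioo_subset_Icc_self hx)).continuousAt (Icc_mem_nhds hx.1 hx.2))

theorem le_mul_exp_neg_integral_of_hasDerivAt_le {u u' g : ℝ → ℝ} {a b : ℝ}
    (hu : ContinuousOn u (Icc a b)) (hu' : ∀ x ∈ Ioo a b, HasDerivAt u (u' x) x)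
    (hg : ContinuousOn g (Icc a b)) (hle : ∀ x ∈ Ioo a b, u' x ≤ -(g x * u x)) :
    ∀ t ∈ Icc a b, u t ≤ u a * exp (-∫ s in a..t, g s) := by
  intro t ht
  set I : ℝ → ℝ := fun y => ∫ s in a..y, g s with hI_def
  have hab : a ≤ b := ht.1.trans ht.2
  have hIc : ContinuousOn I (Icc a b) := by
    have hint : IntervalIntegrable g volume a b := hg.intervalIntegrable_of_Icc hab
    simpa only [uIcc_of_le hab] using continuousOn_primitive_interval' hint left_mem_uIcc
  have hanti : AntitoneOn (fun y => u y * exp (I y)) (Icc a b) := by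
    refine antitoneOn_of_hasDerivWithinAt_nonpos (convex_Icc a b) (hu.mul hIc.rexp)
      (f' := fun x => exp (I x) * (u' x + g x * u x)) ?_ ?_
    · intro x hx
      rw [interior_Icc] at hx
      exact ((hu' x hx).mul (hasDerivAt_integral_of_continuousOn_Icc hg hx).exp
        ).hasDerivWithinAt.congr_deriv (by ring)
    · intro x hx
      rw [interior_Icc] at hx
      exact mul_nonpos_of_nonneg_of_nonpos (exp_pos _).le (by linarith [hle x hx])
  calc u t = u t * exp (I t) * exp (-I t) := by
        rw [mul_assoc, ← exp_add, add_neg_cancel, exp_zero, mul_one]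
    _ ≤ u a * exp (I a) * exp (-I t) :=
        mul_le_mul_of_nonneg_right (hanti (left_mem_Icc.2 hab) ht ht.1) (exp_pos _).le
    _ = u a * exp (-I t) := by simp [hI_def]

theorem HasDerivAt.div_sqrt {f h : ℝ → ℝ} {f' h' x : ℝ} (hf : HasDerivAt f f' x)
    (hh : HasDerivAt h h' x) (hx : 0 < h x) :
    HasDerivAt (fun y => f y / √(h y)) ((f' - f x * h' / (2 * h x)) / √(h x)) x := by
  have hs : √(h x) ≠ 0 := (sqrt_pos.2 hx).ne'
  refine (hf.div (hh.sqrt hx.ne') hs).congr_deriv ?_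
  field_simp
  rw [sq_sqrt hx.le]
  ring

theorem gronwall_Y_inequality_general
    (t0 τ T : ℝ)
    (h R V c h_bl : ℝ → ℝ)
    (hhc : ContinuousOn h (Set.Icc τ T)) (hRc : ContinuousOn R (Set.Icc τ T))
    (hVc : ContinuousOn V (Set.Icc τ T)) (hcc : ContinuousOn c (Set.Icc τ T))
    (hhpos : ∀ t ∈ Set.Icc τ T, h t > 0) (hVpos : ∀ t ∈ Set.Icc τ T, V t > 0)
    (hh : ∀ t ∈ Set.Icc τ T,
      HasDerivAt h (-(2 / (t + t0)) * (h t - h_bl t)) t)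
    (Y Y' : ℝ → ℝ)
    (hY : ∀ t ∈ Set.Icc τ T, HasDerivAt Y (Y' t) t)
    (hineq : ∀ t ∈ Set.Icc τ T,
      Y' t + (Y t / (t + t0)) * (1 - h_bl t / h t)
          + (4 * π * R t * h t * c t / V t) * Y t ≤ 0) :
    ∀ t ∈ Set.Icc τ T,
      Y t / Real.sqrt (h t)
        ≤ (Y τ / Real.sqrt (h τ))
            * Real.exp (-∫ s in τ..t, 4 * π * R s * h s * c s / V s) := by
  have hderiv : ∀ t ∈ Icc τ T, HasDerivAt (fun s => Y s / √(h s))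
      ((Y' t + Y t / (t + t0) * (1 - h_bl t / h t)) / √(h t)) t := by
    intro t ht
    have h_ne : h t ≠ 0 := (hhpos t ht).ne'
    refine ((hY t ht).div_sqrt (hh t ht) (hhpos t ht)).congr_deriv ?_
    field_simp
    ring
  have hgc : ContinuousOn (fun s => 4 * π * R s * h s * c s / V s) (Icc τ T) :=
    (((continuousOn_const.mul hRc).mul hhc).mul hcc).div hVc fun s hs => (hVpos s hs).ne'
  refine le_mul_exp_neg_integral_of_hasDerivAt_le
    (fun t ht => (hderiv t ht).continuousAt.continuousWithinAt)
    (fun t ht => hderiv t (Ioo_subset_Icc_self ht)) hgc fun t ht => ?_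
  have hineq_t := hineq t (Ioo_subset_Icc_self ht)
  calc (Y' t + Y t / (t + t0) * (1 - h_bl t / h t)) / √(h t)
      ≤ -(4 * π * R t * h t * c t / V t * Y t) / √(h t) :=
        div_le_div_of_nonneg_right (by linarith) (sqrt_nonneg _)
    _ = _ := by ring

/-- A Gronwall-type inequality: if `h' = −(2/(t+t0))·(h − h_bl)` with
`h > 0`, `V > 0` on `[τ, T]`, and `Y` satisfies the differential inequality
`Y' + (Y/(t+t0))·(1 − h_bl/h) + (4πRhc/V)·Y ≤ 0`, then
`Y(t)/√(h(t)) ≤ (Y(τ)/√(h(τ)))·exp(−∫_τ^t 4πRhc/V ds)` on `[τ, T]`. -/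
theorem gronwall_Y_inequality
    (t0 t1 τ T : ℝ) (hτT : τ ≤ T)
    (hpos : ∀ t ∈ Set.Icc τ T, t + t0 > 0 ∧ t + t1 > 0)
    (h R V c h_bl : ℝ → ℝ)
    (hhc : ContinuousOn h (Set.Icc τ T)) (hRc : ContinuousOn R (Set.Icc τ T))
    (hVc : ContinuousOn V (Set.Icc τ T)) (hcc : ContinuousOn c (Set.Icc τ T))
    (hblc : ContinuousOn h_bl (Set.Icc τ T))
    (hhpos : ∀ t ∈ Set.Icc τ T, h t > 0) (hVpos : ∀ t ∈ Set.Icc τ T, V t > 0)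
    (hh : ∀ t ∈ Set.Icc τ T,
      HasDerivAt h (-(2 / (t + t0)) * (h t - h_bl t)) t)
    (Y Y' : ℝ → ℝ)
    (hY : ∀ t ∈ Set.Icc τ T, HasDerivAt Y (Y' t) t)
    (hineq : ∀ t ∈ Set.Icc τ T,
      Y' t + (Y t / (t + t0)) * (1 - h_bl t / h t)
          + (4 * π * R t * h t * c t / V t) * Y t ≤ 0) :
    ∀ t ∈ Set.Icc τ T,
      Y t / Real.sqrt (h t)
        ≤ (Y τ / Real.sqrt (h τ))
            * Real.exp (-∫ s in τ..t, 4 * π * R s * h s * c s / V s) :=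
  gronwall_Y_inequality_general t0 τ T h R V c h_bl hhc hRc hVc hcc hhpos hVpos hh Y Y' hY hineq
end

section
/- Consider the dimensionless regularized rim-lamella system on [τ, t*] with t + t0 > 0, t + t1 > 0, R(t) > 0, V(t) > 0 and h(t) ≥ h_bl(t) > 0 on [τ, t*], We > 0 and 1 − cos θ > 0. If the velocity defect satisfies Δ(τ) ≤ c(τ), then Δ(t) ≤ c(t) for all t ∈ [τ, t*]. -/
/-!
Write `s = t + t0`, `q = h_bl / h ∈ (0, 1]` and `g = (1 - q) / s`, so that `ū = R g` and `c' = c g`.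
At a time where the defect touches the capillary speed, `Δ = c`, the momentum flux `2πRhΔ²`
exactly balances the capillary force, so `U' = 0`; substituting `U = R g - c` then gives
`c' - Δ' = 2 c g + R (3 q (1 - q) / s² + h_bl' / (s h))`, which is strictly positive because the
boundary layer grows (`h_bl' = a / (2 √(t + t1)) > 0`). Hence `Δ - c`, which starts nonpositive,
can never cross zero.
-/

open Real Set

theorem le_of_deriv_lt_deriv_of_eq {f B : ℝ → ℝ} {a b : ℝ}
    (hf : ∀ x ∈ Icc a b, DifferentiableAt ℝ f x) (hB : ∀ x ∈ Icc a b, DifferentiableAt ℝ B x)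
    (ha : f a ≤ B a) (bound : ∀ x ∈ Icc a b, f x = B x → deriv f x < deriv B x) :
    ∀ x ∈ Icc a b, f x ≤ B x := fun _ hx =>
  image_le_of_deriv_right_lt_deriv_boundary'
    (fun x hx => (hf x hx).continuousAt.continuousWithinAt)
    (fun x hx => (hf x (Ico_subset_Icc_self hx)).hasDerivAt.hasDerivWithinAt) ha
    (fun x hx => (hB x hx).continuousAt.continuousWithinAt)
    (fun x hx => (hB x (Ico_subset_Icc_self hx)).hasDerivAt.hasDerivWithinAt)
    (fun x hx => bound x (Ico_subset_Icc_self hx)) hx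

theorem hasDerivAt_sqrt_const_div {f : ℝ → ℝ} {f' K x : ℝ} (hK : 0 < K) (hfx : 0 < f x)
    (hf : HasDerivAt f f' x) :
    HasDerivAt (fun t => √(K / f t)) (-√(K / f x) * f' / (2 * f x)) x := by
  have hKf : 0 < K / f x := div_pos hK hfx
  convert ((hasDerivAt_const x K).fun_div hf hfx.ne').sqrt hKf.ne' using 1
  have hS : 0 < √(K / f x) := sqrt_pos.2 hKf
  have hK : K = √(K / f x) ^ 2 * f x := by rw [sq_sqrt hKf.le]; field_simp
  set S := √(K / f x)
  rw [hK]
  field_simp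
  ring

theorem hasDerivAt_const_mul_sqrt_add_const (a t1 x : ℝ) (hx : 0 < x + t1) :
    HasDerivAt (fun t => a * √(t + t1)) (a / (2 * √(x + t1))) x := by
  refine ((((hasDerivAt_id' x).add_const t1).sqrt hx.ne').const_mul a).congr_deriv ?_
  ring

theorem hasDerivAt_div_add_const_mul_one_sub_div {R h b : ℝ → ℝ} {R' h' b' t0 x : ℝ}
    (hR : HasDerivAt R R' x) (hh : HasDerivAt h h' x) (hb : HasDerivAt b b' x)
    (hs : x + t0 ≠ 0) (hhx : h x ≠ 0) :
    HasDerivAt (fun t => R t / (t + t0) * (1 - b t / h t))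
      ((R' * (x + t0) - R x) / (x + t0) ^ 2 * (1 - b x / h x)
        - R x / (x + t0) * ((b' * h x - b x * h') / h x ^ 2)) x := by
  refine ((hR.fun_div ((hasDerivAt_id' x).add_const t0) hs).fun_mul
    ((hasDerivAt_const x 1).fun_sub (hb.fun_div hh hhx))).congr_deriv ?_
  ring

theorem defect_deriv_lt_capillary_deriv_of_eq {R U U' s h b b' c : ℝ} (hs : 0 < s)
    (hR : 0 < R) (hb : 0 < b) (hbh : b ≤ h) (hc : 0 ≤ c) (hb' : 0 < b') (hU' : U' = 0)
    (hcontact : R / s * (1 - b / h) - U = c) :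
    (U * s - R) / s ^ 2 * (1 - b / h) - R / s * ((b' * h - b * (-(2 / s) * (h - b))) / h ^ 2)
      - U' < -c * (-(2 / s) * (h - b)) / (2 * h) := by
  have hh : 0 < h := hb.trans_le hbh
  obtain rfl : U = R / s * (1 - b / h) - c := by linarith
  rw [hU', sub_zero]
  have hq : 0 ≤ 1 - b / h := by rw [sub_nonneg, div_le_one hh]; exact hbh
  have hgap : -c * (-(2 / s) * (h - b)) / (2 * h)
      - (((R / s * (1 - b / h) - c) * s - R) / s ^ 2 * (1 - b / h)
        - R / s * ((b' * h - b * (-(2 / s) * (h - b))) / h ^ 2))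
      = 2 * c * ((1 - b / h) / s) + R * (3 * (b / h) * (1 - b / h) / s ^ 2 + b' / (s * h)) := by
    field_simp
    ring
  have hgap_pos :
      0 < 2 * c * ((1 - b / h) / s) + R * (3 * (b / h) * (1 - b / h) / s ^ 2 + b' / (s * h)) := by
    positivity
  linarith

theorem velocity_defect_bounded_general
    (We t0 t1 a θ τ tstar : ℝ) (hWe : We > 0) (ha : a > 0)
    (hθ : 1 - Real.cos θ > 0)
    (R U V h hbl ubar c : ℝ → ℝ)
    (hbl_def : ∀ t, hbl t = a * Real.sqrt (t + t1))
    (hubar_def : ∀ t, ubar t = (R t / (t + t0)) * (1 - hbl t / h t))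
    (hc_def : ∀ t, c t = Real.sqrt ((1 - Real.cos θ) / (We * h t)))
    (hpos : ∀ t ∈ Set.Icc τ tstar,
      t + t0 > 0 ∧ t + t1 > 0 ∧ R t > 0 ∧ V t > 0 ∧ hbl t > 0 ∧ h t ≥ hbl t)
    (hR : ∀ t ∈ Set.Icc τ tstar, HasDerivAt R (U t) t)
    (hh : ∀ t ∈ Set.Icc τ tstar, HasDerivAt h (-(2 / (t + t0)) * (h t - hbl t)) t)
    (hU : ∀ t ∈ Set.Icc τ tstar, DifferentiableAt ℝ U t)
    (hmom : ∀ t ∈ Set.Icc τ tstar,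
      V t * deriv U t
        = 2 * π * R t * h t * (ubar t - U t) ^ 2 - 2 * π * R t * (1 - Real.cos θ) / We)
    (hinit : ubar τ - U τ ≤ c τ) :
    ∀ t ∈ Set.Icc τ tstar, ubar t - U t ≤ c t := by
  have hc_eq : c = fun t => √((1 - cos θ) / We / h t) := funext fun t => by rw [hc_def, div_div]
  have hubar_eq : ubar = fun t => R t / (t + t0) * (1 - hbl t / h t) := funext hubar_def
  have hbl_eq : hbl = fun t => a * √(t + t1) := funext hbl_def
  have hderiv : ∀ x ∈ Icc τ tstar, DifferentiableAt ℝ (fun t => ubar t - U t) x ∧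
      DifferentiableAt ℝ c x ∧
      (ubar x - U x = c x → deriv (fun t => ubar t - U t) x < deriv c x) := by
    intro x hx
    obtain ⟨hs, hs1, hRx, hVx, hblx, hhbl⟩ := hpos x hx
    have hhx : 0 < h x := hblx.trans_le hhbl
    have hbl' := hasDerivAt_const_mul_sqrt_add_const a t1 x hs1
    rw [← hbl_eq] at hbl'
    have hubar' := hasDerivAt_div_add_const_mul_one_sub_div (hR x hx) (hh x hx) hbl' hs.ne' hhx.ne'
    rw [← hubar_eq] at hubar'
    have hdefect' := hubar'.fun_sub (hU x hx).hasDerivAt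
    have hc' := hasDerivAt_sqrt_const_div (div_pos hθ hWe) hhx (hh x hx)
    have hcx : √((1 - cos θ) / We / h x) = c x := by rw [hc_eq]
    rw [← hc_eq, hcx] at hc'
    refine ⟨hdefect'.differentiableAt, hc'.differentiableAt, fun hcontact => ?_⟩
    have hU'_zero : deriv U x = 0 := by
      have hc_sq : c x ^ 2 = (1 - cos θ) / We / h x := by
        rw [← hcx]; exact sq_sqrt (by positivity)
      have : V x * deriv U x = 0 := by
        rw [hmom x hx, hcontact, hc_sq]; field_simp; ring
      exact (mul_eq_zero.1 this).resolve_left hVx.ne'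
    rw [hdefect'.deriv, hc'.deriv]
    refine defect_deriv_lt_capillary_deriv_of_eq hs hRx hblx hhbl (hcx ▸ sqrt_nonneg _)
      (by positivity) hU'_zero ?_
    rw [← hcontact, hubar_def]
  exact le_of_deriv_lt_deriv_of_eq (fun x hx => (hderiv x hx).1) (fun x hx => (hderiv x hx).2.1)
    hinit fun x hx => (hderiv x hx).2.2

/-- In the dimensionless regularized rim-lamella system on `[τ, t*]`
(with `t+t0 > 0`, `t+t1 > 0`, `R > 0`, `V > 0`, `h ≥ h_bl > 0`, `We > 0`,
`1 − cos θ > 0`), if the velocity defect satisfies `Δ(τ) ≤ c(τ)`, then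
`Δ(t) ≤ c(t)` for all `t ∈ [τ, t*]`. -/
theorem velocity_defect_bounded
    (We t0 t1 a θ τ tstar : ℝ) (hWe : We > 0) (ha : a > 0)
    (hθ : 1 - Real.cos θ > 0) (hτt : τ ≤ tstar)
    (R U V h hbl ubar c : ℝ → ℝ)
    (hbl_def : ∀ t, hbl t = a * Real.sqrt (t + t1))
    (hubar_def : ∀ t, ubar t = (R t / (t + t0)) * (1 - hbl t / h t))
    (hc_def : ∀ t, c t = Real.sqrt ((1 - Real.cos θ) / (We * h t)))
    (hpos : ∀ t ∈ Set.Icc τ tstar,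
      t + t0 > 0 ∧ t + t1 > 0 ∧ R t > 0 ∧ V t > 0 ∧ hbl t > 0 ∧ h t ≥ hbl t)
    (hR : ∀ t ∈ Set.Icc τ tstar, HasDerivAt R (U t) t)
    (hh : ∀ t ∈ Set.Icc τ tstar, HasDerivAt h (-(2 / (t + t0)) * (h t - hbl t)) t)
    (hV : ∀ t ∈ Set.Icc τ tstar, HasDerivAt V (2 * π * R t * h t * (ubar t - U t)) t)
    (hU : ∀ t ∈ Set.Icc τ tstar, DifferentiableAt ℝ U t)
    (hmom : ∀ t ∈ Set.Icc τ tstar,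
      V t * deriv U t
        = 2 * π * R t * h t * (ubar t - U t) ^ 2 - 2 * π * R t * (1 - Real.cos θ) / We)
    (hinit : ubar τ - U τ ≤ c τ) :
    ∀ t ∈ Set.Icc τ tstar, ubar t - U t ≤ c t :=
  velocity_defect_bounded_general We t0 t1 a θ τ tstar hWe ha hθ R U V h hbl ubar c hbl_def
    hubar_def hc_def hpos hR hh hU hmom hinit
end

section
/- Consider the dimensionless regularized rim-lamella system on [τ, t*] with t + t0 > 0, t + t1 > 0, h(t) > 0 on [τ, t*], We > 0 and 1 − cos θ > 0, and suppose the velocity defect satisfies Δ(t) ≤ c(t) for all t ∈ [τ, t*]. Then R(t*)·√(h(t*)) ≥ R(τ)·√(h(τ)) − √((1 − cos θ)/We)·(t* − τ); in particular R(t*) ≥ ( R(τ)·√(h(τ)) − √((1 − cos θ)/We)·(t* − τ) ) / √(h(t*)). -/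
open Real Set

/-! Along the flow, `d/dt (R √h) = U √h + R h' / (2 √h) = (U - ū) √h = -Δ √h`, because the
thinning law for `h` makes `R h' / (2 √h)` equal to `-ū √h`. Since `c √h = √((1 - cos θ)/We)` is constant, the hypothesis
`Δ ≤ c` bounds this derivative below by `-√((1 - cos θ)/We)`, and the mean value inequality
integrates the bound over `[τ, t*]`. -/

theorem mul_sub_le_sub_of_le_hasDerivAt_Icc {f f' : ℝ → ℝ} {a b C : ℝ} (hab : a ≤ b)
    (hf : ∀ t ∈ Icc a b, HasDerivAt f (f' t) t) (hC : ∀ t ∈ Icc a b, C ≤ f' t) :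
    C * (b - a) ≤ f b - f a := by
  have hdiff : DifferentiableOn ℝ f (Icc a b) := fun t ht =>
    (hf t ht).differentiableAt.differentiableWithinAt
  refine (convex_Icc a b).mul_sub_le_image_sub_of_le_deriv hdiff.continuousOn
    (hdiff.mono interior_subset) (fun t ht => ?_) a (left_mem_Icc.2 hab) b
    (right_mem_Icc.2 hab) hab
  rw [(hf t (interior_subset ht)).deriv]
  exact hC t (interior_subset ht)

theorem HasDerivAt.mul_sqrt {R h : ℝ → ℝ} {u h' t : ℝ} (hR : HasDerivAt R u t)
    (hh : HasDerivAt h h' t) (ht : h t ≠ 0) :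
    HasDerivAt (fun s => R s * √(h s)) (u * √(h t) + R t * (1 / (2 * √(h t)) * h')) t :=
  hR.mul ((hasDerivAt_sqrt ht).comp t hh)

theorem mul_thinning_rate_div_two_sqrt {R h hbl T : ℝ} (hh : 0 < h) :
    R * (1 / (2 * √h) * (-(2 / T) * (h - hbl))) = -(R / T * (1 - hbl / h)) * √h := by
  have hs0 : √h ≠ 0 := (sqrt_pos.2 hh).ne'
  have hs : √h * √h = h := mul_self_sqrt hh.le
  generalize √h = s at hs0 hs ⊢
  subst hs
  field_simp

theorem sqrt_div_mul_sqrt {x y : ℝ} (hx : 0 < x) : √(y / x) * √x = √y := by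
  rw [← sqrt_mul' _ hx.le, div_mul_cancel₀ _ hx.ne']

theorem lower_bound_at_tstar_general
    (We t0 t1 θ τ tstar : ℝ) (hτt : τ ≤ tstar)
    (R U h hbl ubar c : ℝ → ℝ)
    (hubar_def : ∀ t, ubar t = (R t / (t + t0)) * (1 - hbl t / h t))
    (hc_def : ∀ t, c t = Real.sqrt ((1 - Real.cos θ) / (We * h t)))
    (hpos : ∀ t ∈ Set.Icc τ tstar, t + t0 > 0 ∧ t + t1 > 0 ∧ h t > 0)
    (hR : ∀ t ∈ Set.Icc τ tstar, HasDerivAt R (U t) t)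
    (hh : ∀ t ∈ Set.Icc τ tstar, HasDerivAt h (-(2 / (t + t0)) * (h t - hbl t)) t)
    (hdefect : ∀ t ∈ Set.Icc τ tstar, ubar t - U t ≤ c t) :
    R tstar * Real.sqrt (h tstar)
        ≥ R τ * Real.sqrt (h τ) - Real.sqrt ((1 - Real.cos θ) / We) * (tstar - τ)
    ∧ R tstar
        ≥ (R τ * Real.sqrt (h τ) - Real.sqrt ((1 - Real.cos θ) / We) * (tstar - τ))
            / Real.sqrt (h tstar) := by
  set K := √((1 - cos θ) / We)
  have hderiv : ∀ t ∈ Icc τ tstar,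
      HasDerivAt (fun s => R s * √(h s)) (-(ubar t - U t) * √(h t)) t := by
    intro t ht
    have hht := (hpos t ht).2.2
    refine ((hR t ht).mul_sqrt (hh t ht) hht.ne').congr_deriv ?_
    rw [mul_thinning_rate_div_two_sqrt hht, hubar_def]
    ring
  have hslope : ∀ t ∈ Icc τ tstar, -K ≤ -(ubar t - U t) * √(h t) := by
    intro t ht
    have hcK : c t * √(h t) = K := by
      rw [hc_def, ← div_div, sqrt_div_mul_sqrt (hpos t ht).2.2]
    rw [← hcK, neg_mul, neg_le_neg_iff]
    exact mul_le_mul_of_nonneg_right (hdefect t ht) (sqrt_nonneg _)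
  have hmain := mul_sub_le_sub_of_le_hasDerivAt_Icc hτt hderiv hslope
  refine ⟨by linarith, ?_⟩
  have hsqrt : 0 < √(h tstar) := sqrt_pos.2 (hpos tstar (right_mem_Icc.2 hτt)).2.2
  rw [ge_iff_le, div_le_iff₀ hsqrt]
  linarith

/-- In the dimensionless regularized rim-lamella system on `[τ, t*]`
with `h > 0`, `We > 0`, `1 − cos θ > 0`, if the velocity defect satisfies `Δ(t) ≤ c(t)`
on `[τ, t*]`, then `R(t*)·√(h(t*)) ≥ R(τ)·√(h(τ)) − √((1 − cos θ)/We)·(t* − τ)`; in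
particular `R(t*) ≥ (R(τ)·√(h(τ)) − √((1 − cos θ)/We)·(t* − τ))/√(h(t*))`. -/
theorem lower_bound_at_tstar
    (We t0 t1 a θ τ tstar : ℝ) (hWe : We > 0) (ha : a > 0)
    (hθ : 1 - Real.cos θ > 0) (hτt : τ ≤ tstar)
    (R U V h hbl ubar c : ℝ → ℝ)
    (hbl_def : ∀ t, hbl t = a * Real.sqrt (t + t1))
    (hubar_def : ∀ t, ubar t = (R t / (t + t0)) * (1 - hbl t / h t))
    (hc_def : ∀ t, c t = Real.sqrt ((1 - Real.cos θ) / (We * h t)))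
    (hpos : ∀ t ∈ Set.Icc τ tstar, t + t0 > 0 ∧ t + t1 > 0 ∧ h t > 0)
    (hR : ∀ t ∈ Set.Icc τ tstar, HasDerivAt R (U t) t)
    (hh : ∀ t ∈ Set.Icc τ tstar, HasDerivAt h (-(2 / (t + t0)) * (h t - hbl t)) t)
    (hV : ∀ t ∈ Set.Icc τ tstar, HasDerivAt V (2 * π * R t * h t * (ubar t - U t)) t)
    (hU : ∀ t ∈ Set.Icc τ tstar, DifferentiableAt ℝ U t)
    (hmom : ∀ t ∈ Set.Icc τ tstar,
      V t * deriv U t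
        = 2 * π * R t * h t * (ubar t - U t) ^ 2 - 2 * π * R t * (1 - Real.cos θ) / We)
    (hdefect : ∀ t ∈ Set.Icc τ tstar, ubar t - U t ≤ c t) :
    R tstar * Real.sqrt (h tstar)
        ≥ R τ * Real.sqrt (h τ) - Real.sqrt ((1 - Real.cos θ) / We) * (tstar - τ)
    ∧ R tstar
        ≥ (R τ * Real.sqrt (h τ) - Real.sqrt ((1 - Real.cos θ) / We) * (tstar - τ))
            / Real.sqrt (h tstar) :=
  lower_bound_at_tstar_general We t0 t1 θ τ tstar hτt R U h hbl ubar c hubar_def hc_def hpos hR hh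
    hdefect
end

section
/- (Main Theorem: bounds on the maximum spreading radius.) Fix We > 0, t0, t1 with t + t0 > 0 and t + t1 > 0 on [τ, T], a > 0, θ with 1 − cos θ > 0, and τ < t* < T. Let R, U, V, h : [τ, T] → ℝ be continuous, with R, U, V, h differentiable on the relevant subintervals, satisfying: (i) on (τ, t*] the dimensionless regularized rim-lamella system R' = U, h' = −(2/(t+t0))·(h − h_bl), V' = 2πRh·(ū − U), V·U' = 2πRh·(ū − U)² − 2πR·(1 − cos θ)/We, with h(t) ≥ h_bl(t) > 0, R(t) > 0 and V(t) > 0; (ii) initial conditions R(τ) = R_init > 0, h(τ) = h_init > 0, V(τ) = 0, and U(τ) = ū(τ) − c(τ); (iii) on [t*, T] the Regime-2 system with h* = h(t*): R' = U, V' = −2πR·h*·U, V·U' = 2πR·h*·U² − 2πR·(1 − cos θ)/We, with V(t) ≥ 0. Then, writing R_max = sup_{t ∈ [τ,T]} R(t), one has ( R_init·√(h_init) − √((1 − cos θ)/We)·(t* − τ) ) / √(h*) ≤ R_max ≤ R_init·√(h_init) / √(h*). -/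
/-!
The total volume `π R² h + V` (lamella disc plus rim) is conserved in both regimes. Since `V ≥ 0`
and `h ≥ h*` throughout, this gives `R² h* ≤ R_init² h_init`, the upper bound.

For the lower bound, the rim is never slower than `ū − c`: the gap `c − ū + U` vanishes at `τ`,
and while it is negative the momentum equation forces `U' > 0`, `c` grows because `h` decreases,
and `ū` decreases, so the gap cannot become negative. Hence
`(R √h)' = √h (U − ū) ≥ −c √h = −√((1 − cos θ)/We)`, and integrating up to `t*` gives the lower
bound on `R(t*) ≤ R_max`.
-/

open Real Set

theorem forall_mem_Icc_of_left_of_Ioc {α : Type*} [PartialOrder α] {p : α → Prop} {a b : α}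
    (hab : a ≤ b) (ha : p a) (h : ∀ x ∈ Ioc a b, p x) : ∀ x ∈ Icc a b, p x := by
  rw [← Ioc_insert_left hab]
  exact forall_mem_insert.2 ⟨ha, h⟩

theorem AntitoneOn.mul_of_nonneg {α : Type*} [Preorder α] {f g : α → ℝ} {s : Set α}
    (hf : AntitoneOn f s) (hg : AntitoneOn g s) (hf₀ : ∀ x ∈ s, 0 ≤ f x)
    (hg₀ : ∀ x ∈ s, 0 ≤ g x) : AntitoneOn (fun x => f x * g x) s :=
  fun _ hx _ hy hxy => mul_le_mul (hf hx hy hxy) (hg hx hy hxy) (hg₀ _ hy) (hf₀ _ hx)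

section Icc

variable {f f' g : ℝ → ℝ} {a b : ℝ}

theorem le_on_Icc_of_le_on_Ioc (hab : a < b) (hf : ContinuousOn f (Icc a b))
    (hg : ContinuousOn g (Icc a b)) (hfg : ∀ x ∈ Ioc a b, f x ≤ g x) :
    ∀ x ∈ Icc a b, f x ≤ g x := by
  rw [← closure_Ioc hab.ne] at hf hg ⊢
  exact le_on_closure hfg hf hg

theorem monotoneOn_Icc_of_hasDerivAt_nonneg (hf : ContinuousOn f (Icc a b))
    (hf' : ∀ x ∈ Ioo a b, HasDerivAt f (f' x) x) (hf'₀ : ∀ x ∈ Ioo a b, 0 ≤ f' x) :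
    MonotoneOn f (Icc a b) :=
  monotoneOn_of_hasDerivWithinAt_nonneg (convex_Icc a b) hf
    (by simpa only [interior_Icc] using fun x hx => (hf' x hx).hasDerivWithinAt)
    (by simpa only [interior_Icc] using hf'₀)

theorem antitoneOn_Icc_of_hasDerivAt_nonpos (hf : ContinuousOn f (Icc a b))
    (hf' : ∀ x ∈ Ioo a b, HasDerivAt f (f' x) x) (hf'₀ : ∀ x ∈ Ioo a b, f' x ≤ 0) :
    AntitoneOn f (Icc a b) :=
  antitoneOn_of_hasDerivWithinAt_nonpos (convex_Icc a b) hf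
    (by simpa only [interior_Icc] using fun x hx => (hf' x hx).hasDerivWithinAt)
    (by simpa only [interior_Icc] using hf'₀)

theorem eq_left_of_hasDerivAt_zero (hf : ContinuousOn f (Icc a b))
    (hf' : ∀ x ∈ Ioo a b, HasDerivAt f 0 x) : ∀ t ∈ Icc a b, f t = f a := by
  intro t ht
  have ha : a ∈ Icc a b := ⟨le_rfl, ht.1.trans ht.2⟩
  exact le_antisymm
    (antitoneOn_Icc_of_hasDerivAt_nonpos hf hf' (fun _ _ => le_rfl) ha ht ht.1)
    (monotoneOn_Icc_of_hasDerivAt_nonneg hf hf' (fun _ _ => le_rfl) ha ht ht.1)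

theorem ContinuousOn.nonneg_of_monotoneOn_of_neg (hf : ContinuousOn f (Icc a b)) (ha : 0 ≤ f a)
    (hmono : ∀ s ∈ Icc a b, ∀ t ∈ Icc a b, (∀ x ∈ Ioo s t, f x < 0) → MonotoneOn f (Icc s t)) :
    ∀ t ∈ Icc a b, 0 ≤ f t := by
  intro t ht
  by_contra! hft
  have hS : IsCompact (Icc a t ∩ f ⁻¹' Ici 0) :=
    isCompact_Icc.of_isClosed_subset
      ((hf.mono (Icc_subset_Icc_right ht.2)).preimage_isClosed_of_isClosed isClosed_Icc
        isClosed_Ici) inter_subset_left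
  -- the last time `s ≤ t` at which `f` is still nonnegative
  obtain ⟨s, ⟨hs, hfs⟩, hmax⟩ :=
    hS.exists_isGreatest ⟨a, ⟨le_rfl, ht.1⟩, show 0 ≤ f a from ha⟩
  have hneg : ∀ x ∈ Ioo s t, f x < 0 := fun x hx => by
    by_contra! hfx
    exact hx.1.not_ge (hmax ⟨⟨hs.1.trans hx.1.le, hx.2.le⟩, hfx⟩)
  have := hmono s ⟨hs.1, hs.2.trans ht.2⟩ t ht hneg ⟨le_rfl, hs.2⟩ ⟨hs.2, le_rfl⟩ hs.2
  exact (show (0 : ℝ) ≤ f s from hfs).not_gt (this.trans_lt hft)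

end Icc

theorem le_mul_sqrt_div_sqrt_of_sq_mul_le {x y r h₀ : ℝ} (hy : 0 < y) (hr : 0 ≤ r)
    (hxy : x ^ 2 * y ≤ r ^ 2 * h₀) : x ≤ r * √h₀ / √y := by
  rw [le_div_iff₀ (sqrt_pos.2 hy)]
  calc x * √y ≤ |x| * √y := mul_le_mul_of_nonneg_right (le_abs_self x) (sqrt_nonneg y)
    _ = √(x ^ 2 * y) := by rw [sqrt_mul' _ hy.le, sqrt_sq_eq_abs]
    _ ≤ √(r ^ 2 * h₀) := sqrt_le_sqrt hxy
    _ = r * √h₀ := by rw [sqrt_mul (sq_nonneg r), sqrt_sq hr]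

theorem antitoneOn_div_add_of_hasDerivAt_le {R U : ℝ → ℝ} {t₀ a b : ℝ}
    (hR : ContinuousOn R (Icc a b)) (ht₀ : ∀ x ∈ Icc a b, 0 < x + t₀)
    (hR' : ∀ x ∈ Ioo a b, HasDerivAt R (U x) x) (hU : ∀ x ∈ Ioo a b, U x ≤ R x / (x + t₀)) :
    AntitoneOn (fun x => R x / (x + t₀)) (Icc a b) := by
  refine antitoneOn_Icc_of_hasDerivAt_nonpos
    (hR.div (continuousOn_id.add continuousOn_const) fun x hx => (ht₀ x hx).ne')
    (fun x hx => (hR' x hx).div ((hasDerivAt_id x).add_const t₀)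
      (ht₀ x (Ioo_subset_Icc_self hx)).ne') fun x hx => ?_
  have := (le_div_iff₀ (ht₀ x (Ioo_subset_Icc_self hx))).1 (hU x hx)
  exact div_nonpos_of_nonpos_of_nonneg (by simp only [mul_one]; linarith) (sq_nonneg _)

noncomputable def totalVolume (R h V : ℝ → ℝ) (t : ℝ) : ℝ := π * R t ^ 2 * h t + V t

theorem totalVolume_eq_left {R U h H V V' : ℝ → ℝ} {a b : ℝ}
    (hR : ContinuousOn R (Icc a b)) (hh : ContinuousOn h (Icc a b))
    (hV : ContinuousOn V (Icc a b)) (hR' : ∀ x ∈ Ioo a b, HasDerivAt R (U x) x)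
    (hh' : ∀ x ∈ Ioo a b, HasDerivAt h (H x) x) (hV' : ∀ x ∈ Ioo a b, HasDerivAt V (V' x) x)
    (hbalance : ∀ x ∈ Ioo a b, π * (2 * R x * U x * h x + R x ^ 2 * H x) + V' x = 0) :
    ∀ t ∈ Icc a b, totalVolume R h V t = totalVolume R h V a :=
  eq_left_of_hasDerivAt_zero (((continuousOn_const.mul (hR.pow 2)).mul hh).add hV) fun x hx =>
    (((((hR' x hx).pow 2).const_mul π).mul (hh' x hx)).add (hV' x hx)).congr_deriv <| by
      rw [← hbalance x hx]; simp only [Nat.cast_ofNat, Pi.pow_apply]; ring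

theorem sq_mul_le_of_totalVolume_eq {R h V : ℝ → ℝ} {t h₁ r h₀ : ℝ} (hV : 0 ≤ V t)
    (hh : h₁ ≤ h t) (hvol : totalVolume R h V t = π * r ^ 2 * h₀) :
    R t ^ 2 * h₁ ≤ r ^ 2 * h₀ := by
  unfold totalVolume at hvol
  nlinarith [pi_pos, mul_le_mul_of_nonneg_left hh (sq_nonneg (R t))]

section RimLamella

variable {R U V h hbl ubar c : ℝ → ℝ} {We θ a t₀ t₁ τ tstar T : ℝ}

theorem antitoneOn_lamellaHeight (hh : ContinuousOn h (Icc τ tstar))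
    (ht₀ : ∀ t ∈ Icc τ tstar, 0 < t + t₀) (hbl_le : ∀ t ∈ Icc τ tstar, hbl t ≤ h t)
    (hh' : ∀ t ∈ Ioc τ tstar, HasDerivAt h (-(2 / (t + t₀)) * (h t - hbl t)) t) :
    AntitoneOn h (Icc τ tstar) :=
  antitoneOn_Icc_of_hasDerivAt_nonpos hh (fun t ht => hh' t (Ioo_subset_Ioc_self ht))
    fun t ht => mul_nonpos_of_nonpos_of_nonneg
      (neg_nonpos.2 (div_nonneg zero_le_two (ht₀ t (Ioo_subset_Icc_self ht)).le))
      (sub_nonneg.2 (hbl_le t (Ioo_subset_Icc_self ht)))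

theorem continuousOn_capillarySpeed (hWe : 0 < We)
    (hc_def : ∀ t, c t = √((1 - cos θ) / (We * h t)))
    (hhc : ContinuousOn h (Icc τ tstar)) (hh_pos : ∀ t ∈ Icc τ tstar, 0 < h t) :
    ContinuousOn c (Icc τ tstar) :=
  (continuousOn_const.div (continuousOn_const.mul hhc) fun t ht =>
    (mul_pos hWe (hh_pos t ht)).ne').sqrt.congr fun t _ => hc_def t

theorem continuousOn_lamellaVelocity (ht₀ : ∀ t ∈ Icc τ tstar, 0 < t + t₀)
    (hbl_def : ∀ t, hbl t = a * √(t + t₁))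
    (hubar_def : ∀ t, ubar t = (R t / (t + t₀)) * (1 - hbl t / h t))
    (hRc : ContinuousOn R (Icc τ tstar)) (hhc : ContinuousOn h (Icc τ tstar))
    (hh_pos : ∀ t ∈ Icc τ tstar, 0 < h t) :
    ContinuousOn ubar (Icc τ tstar) := by
  have hbl_cont : Continuous hbl := funext hbl_def ▸ by fun_prop
  exact ((hRc.div (continuousOn_id.add continuousOn_const) fun t ht => (ht₀ t ht).ne').mul
    (continuousOn_const.sub (hbl_cont.continuousOn.div hhc fun t ht => (hh_pos t ht).ne'))).congr
    fun t _ => hubar_def t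

theorem rimAcceleration_pos_of_capillarySpeed_lt {R₀ h₀ V₀ w dU : ℝ} (hWe : 0 < We)
    (hR : 0 < R₀) (hh : 0 < h₀) (hV : 0 < V₀) (hw : √((1 - cos θ) / (We * h₀)) < w)
    (hmom : V₀ * dU = 2 * π * R₀ * h₀ * w ^ 2 - 2 * π * R₀ * (1 - cos θ) / We) : 0 < dU := by
  have hθ : 0 ≤ 1 - cos θ := sub_nonneg.2 (cos_le_one θ)
  have hc_sq : h₀ * √((1 - cos θ) / (We * h₀)) ^ 2 = (1 - cos θ) / We := by
    rw [sq_sqrt (by positivity)]; field_simp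
  have hsq : √((1 - cos θ) / (We * h₀)) ^ 2 < w ^ 2 :=
    pow_lt_pow_left₀ hw (sqrt_nonneg _) two_ne_zero
  have hacc : 0 < V₀ * dU := by
    rw [hmom, mul_div_assoc, ← hc_sq]
    have := mul_lt_mul_of_pos_left hsq hh
    have : 0 < 2 * π * R₀ := by positivity
    nlinarith
  exact pos_of_mul_pos_right hacc hV.le

theorem sub_le_capillarySpeed (hWe : 0 < We) (ha : 0 ≤ a)
    (ht₀ : ∀ t ∈ Icc τ tstar, 0 < t + t₀)
    (hbl_def : ∀ t, hbl t = a * √(t + t₁))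
    (hubar_def : ∀ t, ubar t = (R t / (t + t₀)) * (1 - hbl t / h t))
    (hc_def : ∀ t, c t = √((1 - cos θ) / (We * h t)))
    (hRc : ContinuousOn R (Icc τ tstar)) (hUc : ContinuousOn U (Icc τ tstar))
    (hhc : ContinuousOn h (Icc τ tstar))
    (hh_pos : ∀ t ∈ Icc τ tstar, 0 < h t) (hh_anti : AntitoneOn h (Icc τ tstar))
    (hbl_le : ∀ t ∈ Icc τ tstar, hbl t ≤ h t) (hR_nonneg : ∀ t ∈ Icc τ tstar, 0 ≤ R t)
    (hR_pos : ∀ t ∈ Ioc τ tstar, 0 < R t) (hV_pos : ∀ t ∈ Ioc τ tstar, 0 < V t)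
    (hR' : ∀ t ∈ Ioc τ tstar, HasDerivAt R (U t) t)
    (hU' : ∀ t ∈ Ioc τ tstar, DifferentiableAt ℝ U t)
    (hmom : ∀ t ∈ Ioc τ tstar,
      V t * deriv U t = 2 * π * R t * h t * (ubar t - U t) ^ 2 - 2 * π * R t * (1 - cos θ) / We)
    (hU₀ : U τ = ubar τ - c τ) :
    ∀ t ∈ Icc τ tstar, ubar t - U t ≤ c t := by
  have hbl_nonneg : ∀ t, 0 ≤ hbl t := fun t => (hbl_def t).symm ▸ by positivity
  have hc_nonneg : ∀ t, 0 ≤ c t := fun t => (hc_def t).symm ▸ sqrt_nonneg _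
  have hc_mono : MonotoneOn c (Icc τ tstar) := fun x hx y hy hxy => by
    rw [hc_def, hc_def]
    have := hh_anti hx hy hxy
    have := hh_pos y hy
    have := sub_nonneg.2 (cos_le_one θ)
    gcongr
  have hQ_anti : AntitoneOn (fun t => 1 - hbl t / h t) (Icc τ tstar) := fun x hx y hy hxy => by
    have hbl_mono : hbl x ≤ hbl y := by rw [hbl_def, hbl_def]; gcongr
    exact sub_le_sub_left
      (div_le_div₀ (hbl_nonneg y) hbl_mono (hh_pos y hy) (hh_anti hx hy hxy)) 1
  have hQ_nonneg : ∀ t ∈ Icc τ tstar, 0 ≤ 1 - hbl t / h t := fun t ht =>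
    sub_nonneg.2 ((div_le_one (hh_pos t ht)).2 (hbl_le t ht))
  have hubar_le : ∀ t ∈ Icc τ tstar, ubar t ≤ R t / (t + t₀) := fun t ht => by
    rw [hubar_def]
    have := div_nonneg (hbl_nonneg t) (hh_pos t ht).le
    have := div_nonneg (hR_nonneg t ht) (ht₀ t ht).le
    nlinarith
  have hcont : ContinuousOn (fun t => c t - ubar t + U t) (Icc τ tstar) :=
    ((continuousOn_capillarySpeed hWe hc_def hhc hh_pos).sub
      (continuousOn_lamellaVelocity ht₀ hbl_def hubar_def hRc hhc hh_pos)).add hUc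
  have key := hcont.nonneg_of_monotoneOn_of_neg (by simp [hU₀]) fun s hs t ht hneg => by
    have hsub : Icc s t ⊆ Icc τ tstar := Icc_subset_Icc hs.1 ht.2
    have hIoc : Ioo s t ⊆ Ioc τ tstar := (Ioo_subset_Ioo hs.1 ht.2).trans Ioo_subset_Ioc_self
    have hgap : ∀ x ∈ Ioo s t, c x < ubar x - U x := fun x hx => by linarith [hneg x hx]
    have hP_anti := antitoneOn_div_add_of_hasDerivAt_le (hRc.mono hsub)
      (fun x hx => ht₀ x (hsub hx)) (fun x hx => hR' x (hIoc hx)) fun x hx => by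
        linarith [hgap x hx, hc_nonneg x, hubar_le x (hsub (Ioo_subset_Icc_self hx))]
    have hubar_anti : AntitoneOn ubar (Icc s t) := by
      simpa only [← hubar_def] using hP_anti.mul_of_nonneg (hQ_anti.mono hsub)
        (fun x hx => div_nonneg (hR_nonneg x (hsub hx)) (ht₀ x (hsub hx)).le)
        fun x hx => hQ_nonneg x (hsub hx)
    have hU_mono : MonotoneOn U (Icc s t) :=
      monotoneOn_Icc_of_hasDerivAt_nonneg (hUc.mono hsub)
        (fun x hx => (hU' x (hIoc hx)).hasDerivAt) fun x hx =>
          (rimAcceleration_pos_of_capillarySpeed_lt hWe (hR_pos x (hIoc hx))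
            (hh_pos x (hsub (Ioo_subset_Icc_self hx))) (hV_pos x (hIoc hx))
            ((hc_def x).symm ▸ hgap x hx) (hmom x (hIoc hx))).le
    simpa only [sub_eq_add_neg] using ((hc_mono.mono hsub).add hubar_anti.neg).add hU_mono
  exact fun t ht => by linarith [key t ht]

theorem monotoneOn_mul_sqrt_add_mul (ht₀ : ∀ t ∈ Icc τ tstar, 0 < t + t₀)
    (hubar_def : ∀ t, ubar t = (R t / (t + t₀)) * (1 - hbl t / h t))
    (hc_def : ∀ t, c t = √((1 - cos θ) / (We * h t)))
    (hRc : ContinuousOn R (Icc τ tstar)) (hhc : ContinuousOn h (Icc τ tstar))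
    (hh_pos : ∀ t ∈ Icc τ tstar, 0 < h t)
    (hR' : ∀ t ∈ Ioc τ tstar, HasDerivAt R (U t) t)
    (hh' : ∀ t ∈ Ioc τ tstar, HasDerivAt h (-(2 / (t + t₀)) * (h t - hbl t)) t)
    (hgap : ∀ t ∈ Icc τ tstar, ubar t - U t ≤ c t) :
    MonotoneOn (fun t => R t * √(h t) + √((1 - cos θ) / We) * t) (Icc τ tstar) := by
  refine monotoneOn_Icc_of_hasDerivAt_nonneg (by fun_prop)
    (fun x hx => ((hR' x (Ioo_subset_Ioc_self hx)).mul
      ((hh' x (Ioo_subset_Ioc_self hx)).sqrt (hh_pos x (Ioo_subset_Icc_self hx)).ne')).add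
      ((hasDerivAt_id x).const_mul _)) fun x hx => ?_
  replace hx := Ioo_subset_Icc_self hx
  have hhx := hh_pos x hx
  have hx₀ := ht₀ x hx
  have hsq : √(h x) * √(h x) = h x := mul_self_sqrt hhx.le
  have hs : 0 < √(h x) := sqrt_pos.2 hhx
  have hlamella :
      R x * (-(2 / (x + t₀)) * (h x - hbl x) / (2 * √(h x))) = -(ubar x * √(h x)) := by
    rw [hubar_def]
    field_simp
    linear_combination (R x * (h x - hbl x)) * hsq
  have hcapillary : √((1 - cos θ) / We) = c x * √(h x) := by
    rw [hc_def, ← sqrt_mul' _ hhx.le]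
    congr 1
    field_simp
  rw [hlamella, hcapillary]
  nlinarith [hgap x hx]

theorem radius_le_of_totalVolume (hτt : τ < tstar) (htT : tstar < T)
    (ht₀ : ∀ t ∈ Icc τ tstar, 0 < t + t₀)
    (hubar_def : ∀ t, ubar t = (R t / (t + t₀)) * (1 - hbl t / h t))
    (hRc : ContinuousOn R (Icc τ T)) (hVc : ContinuousOn V (Icc τ T))
    (hhc : ContinuousOn h (Icc τ T))
    (hh_pos : ∀ t ∈ Icc τ tstar, 0 < h t) (hh_anti : AntitoneOn h (Icc τ tstar))
    (hV_nonneg : ∀ t ∈ Icc τ tstar, 0 ≤ V t)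
    (h1R : ∀ t ∈ Ioc τ tstar, HasDerivAt R (U t) t)
    (h1h : ∀ t ∈ Ioc τ tstar, HasDerivAt h (-(2 / (t + t₀)) * (h t - hbl t)) t)
    (h1V : ∀ t ∈ Ioc τ tstar, HasDerivAt V (2 * π * R t * h t * (ubar t - U t)) t)
    (h2R : ∀ t ∈ Icc tstar T, HasDerivAt R (U t) t)
    (h2V : ∀ t ∈ Icc tstar T, HasDerivAt V (-(2 * π * R t * h tstar * U t)) t)
    (h2V_nonneg : ∀ t ∈ Icc tstar T, 0 ≤ V t) (hV₀ : V τ = 0) (hR₀ : 0 ≤ R τ) :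
    ∀ t ∈ Icc τ T, R t ≤ R τ * √(h τ) / √(h tstar) := by
  have hsub₁ : Icc τ tstar ⊆ Icc τ T := Icc_subset_Icc_right htT.le
  have hsub₂ : Icc tstar T ⊆ Icc τ T := Icc_subset_Icc_left hτt.le
  have hstar : tstar ∈ Icc τ tstar := right_mem_Icc.2 hτt.le
  have hvol₁ := totalVolume_eq_left (hRc.mono hsub₁) (hhc.mono hsub₁) (hVc.mono hsub₁)
    (fun t ht => h1R t (Ioo_subset_Ioc_self ht)) (fun t ht => h1h t (Ioo_subset_Ioc_self ht))
    (fun t ht => h1V t (Ioo_subset_Ioc_self ht)) fun t ht => by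
      have := (hh_pos t (Ioo_subset_Icc_self ht)).ne'
      have := (ht₀ t (Ioo_subset_Icc_self ht)).ne'
      rw [hubar_def]; field_simp; ring
  have hvol₂ := totalVolume_eq_left (hRc.mono hsub₂) continuousOn_const (hVc.mono hsub₂)
    (fun t ht => h2R t (Ioo_subset_Icc_self ht)) (fun t _ => hasDerivAt_const t (h tstar))
    (fun t ht => h2V t (Ioo_subset_Icc_self ht)) fun t _ => by ring
  have hinit : totalVolume R h V τ = π * R τ ^ 2 * h τ := by
    simp only [totalVolume, hV₀, add_zero]
  refine fun t ht => le_mul_sqrt_div_sqrt_of_sq_mul_le (hh_pos tstar hstar) hR₀ ?_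
  rcases le_total t tstar with htle | htge
  · have ht' : t ∈ Icc τ tstar := ⟨ht.1, htle⟩
    exact sq_mul_le_of_totalVolume_eq (hV_nonneg t ht') (hh_anti ht' hstar htle)
      ((hvol₁ t ht').trans hinit)
  · exact sq_mul_le_of_totalVolume_eq (h := fun _ => h tstar) (h2V_nonneg t ⟨htge, ht.2⟩) le_rfl
      (((hvol₂ t ⟨htge, ht.2⟩).trans (hvol₁ tstar hstar)).trans hinit)

end RimLamella

theorem spreading_radius_bounds_general
    (We t0 t1 a θ τ tstar T R_init h_init : ℝ)
    (hWe : We > 0) (ha : a > 0)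
    (hτt : τ < tstar) (htT : tstar < T)
    (hpos : ∀ t ∈ Set.Icc τ T, t + t0 > 0 ∧ t + t1 > 0)
    (R U V h hbl ubar c : ℝ → ℝ)
    (hbl_def : ∀ t, hbl t = a * Real.sqrt (t + t1))
    (hubar_def : ∀ t, ubar t = (R t / (t + t0)) * (1 - hbl t / h t))
    (hc_def : ∀ t, c t = Real.sqrt ((1 - Real.cos θ) / (We * h t)))
    -- continuity on [τ, T]
    (hRc : ContinuousOn R (Set.Icc τ T)) (hUc : ContinuousOn U (Set.Icc τ T))
    (hVc : ContinuousOn V (Set.Icc τ T)) (hhc : ContinuousOn h (Set.Icc τ T))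
    -- (i) Regime 1 on (τ, t*]
    (h1pos : ∀ t ∈ Set.Ioc τ tstar,
      hbl t > 0 ∧ h t ≥ hbl t ∧ R t > 0 ∧ V t > 0)
    (h1R : ∀ t ∈ Set.Ioc τ tstar, HasDerivAt R (U t) t)
    (h1h : ∀ t ∈ Set.Ioc τ tstar, HasDerivAt h (-(2 / (t + t0)) * (h t - hbl t)) t)
    (h1V : ∀ t ∈ Set.Ioc τ tstar, HasDerivAt V (2 * π * R t * h t * (ubar t - U t)) t)
    (h1U : ∀ t ∈ Set.Ioc τ tstar, DifferentiableAt ℝ U t)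
    (h1mom : ∀ t ∈ Set.Ioc τ tstar,
      V t * deriv U t
        = 2 * π * R t * h t * (ubar t - U t) ^ 2 - 2 * π * R t * (1 - Real.cos θ) / We)
    -- (ii) initial conditions
    (hRinit : R τ = R_init) (hhinit : h τ = h_init)
    (hRipos : R_init > 0)
    (hV0 : V τ = 0) (hU0 : U τ = ubar τ - c τ)
    -- (iii) Regime 2 on [t*, T], with h* = h(t*)
    (h2R : ∀ t ∈ Set.Icc tstar T, HasDerivAt R (U t) t)
    (h2V : ∀ t ∈ Set.Icc tstar T, HasDerivAt V (-(2 * π * R t * h tstar * U t)) t)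
    (h2Vnn : ∀ t ∈ Set.Icc tstar T, V t ≥ 0) :
    (R_init * Real.sqrt h_init - Real.sqrt ((1 - Real.cos θ) / We) * (tstar - τ))
          / Real.sqrt (h tstar)
        ≤ sSup (R '' Set.Icc τ T)
    ∧ sSup (R '' Set.Icc τ T) ≤ R_init * Real.sqrt h_init / Real.sqrt (h tstar) := by
  have hsub : Icc τ tstar ⊆ Icc τ T := Icc_subset_Icc_right htT.le
  have hstar : tstar ∈ Icc τ tstar := right_mem_Icc.2 hτt.le
  have ht₀ : ∀ t ∈ Icc τ tstar, 0 < t + t0 := fun t ht => (hpos t (hsub ht)).1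
  have hτ : τ ∈ Icc τ tstar := left_mem_Icc.2 hτt.le
  have hbl_cont : Continuous hbl := funext hbl_def ▸ by fun_prop
  have hbl_le := le_on_Icc_of_le_on_Ioc hτt hbl_cont.continuousOn (hhc.mono hsub) fun t ht =>
    (h1pos t ht).2.1
  have hh_pos : ∀ t ∈ Icc τ tstar, 0 < h t := fun t ht =>
    ((hbl_def t).symm ▸ mul_pos ha (sqrt_pos.2 (hpos t (hsub ht)).2)).trans_le (hbl_le t ht)
  have hh_anti := antitoneOn_lamellaHeight (hhc.mono hsub) ht₀ hbl_le h1h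
  have hR_nonneg := forall_mem_Icc_of_left_of_Ioc hτt.le (hRinit ▸ hRipos.le) fun t ht =>
    (h1pos t ht).2.2.1.le
  have hgap := sub_le_capillarySpeed hWe ha.le ht₀ hbl_def hubar_def hc_def (hRc.mono hsub)
    (hUc.mono hsub) (hhc.mono hsub) hh_pos hh_anti hbl_le hR_nonneg (fun t ht => (h1pos t ht).2.2.1)
    (fun t ht => (h1pos t ht).2.2.2) h1R h1U h1mom hU0
  have hgrowth := monotoneOn_mul_sqrt_add_mul ht₀ hubar_def hc_def (hRc.mono hsub) (hhc.mono hsub)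
    hh_pos h1R h1h hgap hτ hstar hτt.le
  have hR_le := radius_le_of_totalVolume hτt htT ht₀ hubar_def hRc hVc hhc hh_pos hh_anti
    (forall_mem_Icc_of_left_of_Ioc hτt.le hV0.ge fun t ht => (h1pos t ht).2.2.2.le)
    h1R h1h h1V h2R h2V h2Vnn hV0 (hR_nonneg τ hτ)
  rw [hRinit, hhinit] at hR_le
  have hbdd : BddAbove (R '' Icc τ T) := ⟨_, forall_mem_image.2 hR_le⟩
  refine ⟨?_, csSup_le ((nonempty_Icc.2 (hτt.trans htT).le).image R) (forall_mem_image.2 hR_le)⟩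
  refine le_trans ?_ (le_csSup hbdd (mem_image_of_mem R (hsub hstar)))
  rw [div_le_iff₀ (sqrt_pos.2 (hh_pos tstar hstar))]
  simp only [hRinit, hhinit] at hgrowth
  linarith

/-- **Main Theorem.** Bounds on the maximum spreading radius for the
dimensionless regularized rim-lamella model: Regime 1 on `(τ, t*]`, Regime 2 (with the
lamella height frozen at `h* = h(t*)`) on `[t*, T]`, with initial conditions
`R(τ) = R_init`, `h(τ) = h_init`, `V(τ) = 0`, `U(τ) = ū(τ) − c(τ)`. Then, with
`R_max = sup_{t ∈ [τ,T]} R(t)`,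
`(R_init·√h_init − √((1−cos θ)/We)·(t*−τ))/√(h*) ≤ R_max ≤ R_init·√h_init/√(h*)`. -/
theorem spreading_radius_bounds
    (We t0 t1 a θ τ tstar T R_init h_init : ℝ)
    (hWe : We > 0) (ha : a > 0) (hθ : 1 - Real.cos θ > 0)
    (hτt : τ < tstar) (htT : tstar < T)
    (hpos : ∀ t ∈ Set.Icc τ T, t + t0 > 0 ∧ t + t1 > 0)
    (R U V h hbl ubar c : ℝ → ℝ)
    (hbl_def : ∀ t, hbl t = a * Real.sqrt (t + t1))
    (hubar_def : ∀ t, ubar t = (R t / (t + t0)) * (1 - hbl t / h t))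
    (hc_def : ∀ t, c t = Real.sqrt ((1 - Real.cos θ) / (We * h t)))
    -- continuity on [τ, T]
    (hRc : ContinuousOn R (Set.Icc τ T)) (hUc : ContinuousOn U (Set.Icc τ T))
    (hVc : ContinuousOn V (Set.Icc τ T)) (hhc : ContinuousOn h (Set.Icc τ T))
    -- (i) Regime 1 on (τ, t*]
    (h1pos : ∀ t ∈ Set.Ioc τ tstar,
      hbl t > 0 ∧ h t ≥ hbl t ∧ R t > 0 ∧ V t > 0)
    (h1R : ∀ t ∈ Set.Ioc τ tstar, HasDerivAt R (U t) t)
    (h1h : ∀ t ∈ Set.Ioc τ tstar, HasDerivAt h (-(2 / (t + t0)) * (h t - hbl t)) t)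
    (h1V : ∀ t ∈ Set.Ioc τ tstar, HasDerivAt V (2 * π * R t * h t * (ubar t - U t)) t)
    (h1U : ∀ t ∈ Set.Ioc τ tstar, DifferentiableAt ℝ U t)
    (h1mom : ∀ t ∈ Set.Ioc τ tstar,
      V t * deriv U t
        = 2 * π * R t * h t * (ubar t - U t) ^ 2 - 2 * π * R t * (1 - Real.cos θ) / We)
    -- (ii) initial conditions
    (hRinit : R τ = R_init) (hhinit : h τ = h_init)
    (hRipos : R_init > 0) (hhipos : h_init > 0)
    (hV0 : V τ = 0) (hU0 : U τ = ubar τ - c τ)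
    -- (iii) Regime 2 on [t*, T], with h* = h(t*)
    (h2R : ∀ t ∈ Set.Icc tstar T, HasDerivAt R (U t) t)
    (h2V : ∀ t ∈ Set.Icc tstar T, HasDerivAt V (-(2 * π * R t * h tstar * U t)) t)
    (h2U : ∀ t ∈ Set.Icc tstar T, DifferentiableAt ℝ U t)
    (h2mom : ∀ t ∈ Set.Icc tstar T,
      V t * deriv U t
        = 2 * π * R t * h tstar * U t ^ 2 - 2 * π * R t * (1 - Real.cos θ) / We)
    (h2Vnn : ∀ t ∈ Set.Icc tstar T, V t ≥ 0) :
    (R_init * Real.sqrt h_init - Real.sqrt ((1 - Real.cos θ) / We) * (tstar - τ))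
          / Real.sqrt (h tstar)
        ≤ sSup (R '' Set.Icc τ T)
    ∧ sSup (R '' Set.Icc τ T) ≤ R_init * Real.sqrt h_init / Real.sqrt (h tstar) :=
  spreading_radius_bounds_general We t0 t1 a θ τ tstar T R_init h_init hWe ha hτt htT hpos R U V h
    hbl ubar c hbl_def hubar_def hc_def hRc hUc hVc hhc h1pos h1R h1h h1V h1U h1mom hRinit hhinit
    hRipos hV0 hU0 h2R h2V h2Vnn
end

section
/- Let c*, h*, V_tot be positive constants and let R, U : I → ℝ be differentiable on an interval I with R'(t) = U(t), (V_tot − π·R(t)²·h*)·U'(t) = 2π·R(t)·h*·(U(t)² − c*²), c*² − U(t)² > 0 and V_tot − π·R(t)²·h* > 0 for all t ∈ I. Then the Hamiltonian H(t) = −(1/2)·log( c*² − U(t)² ) − log( V_tot − π·R(t)²·h* ) is constant on I. -/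
open Real

/-!
With `V = V_tot - πR²h*`, the term `-(1/2) log (c*² - U²)` changes at rate
`U U' / (c*² - U²)`, which by the momentum equation equals `-2πRh* U / V`, while `-log V`
changes at rate `2πRh* U / V` because `V' = -2πRh* R' = -2πRh* U`. The two rates cancel, and a function with vanishing
derivative on an interval is constant there.
-/

theorem Set.OrdConnected.eq_of_hasDerivAt_zero {E : Type*} [NormedAddCommGroup E]
    [NormedSpace ℝ E] {I : Set ℝ} (hI : I.OrdConnected) {f : ℝ → E}
    (hf : ∀ t ∈ I, HasDerivAt f 0 t) {s t : ℝ} (hs : s ∈ I) (ht : t ∈ I) : f s = f t := by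
  have hle := hI.convex.norm_image_sub_le_of_norm_hasDerivWithin_le (C := 0)
    (fun x hx => (hf x hx).hasDerivWithinAt) (fun _ _ => by simp) ht hs
  rw [zero_mul, norm_le_zero_iff] at hle
  exact sub_eq_zero.1 hle

noncomputable def regime2Hamiltonian (cstar hstar Vtot : ℝ) (R U : ℝ → ℝ) (t : ℝ) : ℝ :=
  -(1 / 2) * Real.log (cstar ^ 2 - U t ^ 2) - Real.log (Vtot - π * R t ^ 2 * hstar)

section Hamiltonian

variable {cstar hstar Vtot : ℝ} {R U : ℝ → ℝ} {t u' : ℝ}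

theorem hasDerivAt_regime2Hamiltonian (hR : HasDerivAt R (U t) t) (hU : HasDerivAt U u' t)
    (hU2 : cstar ^ 2 - U t ^ 2 ≠ 0) (hV2 : Vtot - π * R t ^ 2 * hstar ≠ 0) :
    HasDerivAt (regime2Hamiltonian cstar hstar Vtot R U)
      (U t * u' / (cstar ^ 2 - U t ^ 2)
        + 2 * π * R t * hstar * U t / (Vtot - π * R t ^ 2 * hstar)) t := by
  have hkin :=
    (((hasDerivAt_const t (cstar ^ 2)).fun_sub (hU.fun_pow 2)).log hU2).const_mul (-(1 / 2))
  have hvol :=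
    ((hasDerivAt_const t Vtot).fun_sub (((hR.fun_pow 2).const_mul π).mul_const hstar)).log hV2
  refine (hkin.fun_sub hvol).congr_deriv ?_
  simp only [Nat.cast_ofNat, Nat.add_one_sub_one, pow_one]
  ring

theorem hasDerivAt_regime2Hamiltonian_eq_zero (hR : HasDerivAt R (U t) t)
    (hU : HasDerivAt U u' t)
    (hmom : (Vtot - π * R t ^ 2 * hstar) * u' = 2 * π * R t * hstar * (U t ^ 2 - cstar ^ 2))
    (hU2 : cstar ^ 2 - U t ^ 2 ≠ 0) (hV2 : Vtot - π * R t ^ 2 * hstar ≠ 0) :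
    HasDerivAt (regime2Hamiltonian cstar hstar Vtot R U) 0 t := by
  convert hasDerivAt_regime2Hamiltonian hR hU hU2 hV2 using 1
  field_simp
  linear_combination -(U t) * hmom

end Hamiltonian

theorem regime2_hamiltonian_constant_general
    (cstar hstar Vtot : ℝ)
    (I : Set ℝ) (hI : I.OrdConnected)
    (R U : ℝ → ℝ)
    (hR : ∀ t ∈ I, HasDerivAt R (U t) t)
    (hU : ∀ t ∈ I, DifferentiableAt ℝ U t)
    (hmom : ∀ t ∈ I,
      (Vtot - π * R t ^ 2 * hstar) * deriv U t
        = 2 * π * R t * hstar * (U t ^ 2 - cstar ^ 2))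
    (hU2 : ∀ t ∈ I, cstar ^ 2 - U t ^ 2 > 0)
    (hV2 : ∀ t ∈ I, Vtot - π * R t ^ 2 * hstar > 0) :
    ∀ s ∈ I, ∀ t ∈ I,
      -(1 / 2) * Real.log (cstar ^ 2 - U s ^ 2)
          - Real.log (Vtot - π * R s ^ 2 * hstar)
        = -(1 / 2) * Real.log (cstar ^ 2 - U t ^ 2)
          - Real.log (Vtot - π * R t ^ 2 * hstar) := fun _ hs _ ht =>
  hI.eq_of_hasDerivAt_zero (f := regime2Hamiltonian cstar hstar Vtot R U)
    (fun t ht => hasDerivAt_regime2Hamiltonian_eq_zero (hR t ht) (hU t ht).hasDerivAt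
      (hmom t ht) (hU2 t ht).ne' (hV2 t ht).ne') hs ht

/-- For the Regime-2 rim-lamella system `R' = U`,
`(V_tot − πR²h*)·U' = 2πRh*·(U² − c*²)` on an interval `I` where `c*² − U² > 0` and
`V_tot − πR²h* > 0`, the Hamiltonian
`H = −(1/2)·log(c*² − U²) − log(V_tot − πR²h*)` is constant on `I`. -/
theorem regime2_hamiltonian_constant
    (cstar hstar Vtot : ℝ) (hc : cstar > 0) (hh : hstar > 0) (hV : Vtot > 0)
    (I : Set ℝ) (hI : I.OrdConnected)
    (R U : ℝ → ℝ)
    (hR : ∀ t ∈ I, HasDerivAt R (U t) t)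
    (hU : ∀ t ∈ I, DifferentiableAt ℝ U t)
    (hmom : ∀ t ∈ I,
      (Vtot - π * R t ^ 2 * hstar) * deriv U t
        = 2 * π * R t * hstar * (U t ^ 2 - cstar ^ 2))
    (hU2 : ∀ t ∈ I, cstar ^ 2 - U t ^ 2 > 0)
    (hV2 : ∀ t ∈ I, Vtot - π * R t ^ 2 * hstar > 0) :
    ∀ s ∈ I, ∀ t ∈ I,
      -(1 / 2) * Real.log (cstar ^ 2 - U s ^ 2)
          - Real.log (Vtot - π * R s ^ 2 * hstar)
        = -(1 / 2) * Real.log (cstar ^ 2 - U t ^ 2)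
          - Real.log (Vtot - π * R t ^ 2 * hstar) :=
  regime2_hamiltonian_constant_general cstar hstar Vtot I hI R U hR hU hmom hU2 hV2
end

section
/- Let c*, h*, V_tot be positive constants and let R, U : I → ℝ be differentiable on an interval I with R'(t) = U(t), (V_tot − π·R(t)²·h*)·U'(t) = 2π·R(t)·h*·(U(t)² − c*²), c*² − U(t)² > 0 and V_tot − π·R(t)²·h* > 0 on I. Fix τ ∈ I and set β² = ( c*² − U(τ)² )·( V_tot − π·R(τ)²·h* )². Then for all t ∈ I one has ( c*² − U(t)² )·( V_tot − π·R(t)²·h* )² = β², and consequently ( R'(t) )² = c*² − β² / ( V_tot − π·R(t)²·h* )². -/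
/-!
With `W = V_tot - π R² h*` one has `W' = -2π h* R U`, so the momentum equation multiplied by `U`
reads `U W U' = (c*² - U²) W'`, which says exactly that `(c*² - U²) W²` has zero derivative.
Hence it is constant on the interval, and dividing by `W² > 0` with `R' = U` gives `(R')²`.
-/

open Real

theorem Convex.eq_of_hasDerivWithinAt_eq_zero {E : Type*} [NormedAddCommGroup E]
    [NormedSpace ℝ E] {s : Set ℝ} (hs : Convex ℝ s) {f : ℝ → E}
    (hf : ∀ x ∈ s, HasDerivWithinAt f 0 s x) {x y : ℝ} (hx : x ∈ s) (hy : y ∈ s) :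
    f x = f y := by
  have hle : ‖f y - f x‖ ≤ 0 * ‖y - x‖ :=
    hs.norm_image_sub_le_of_norm_hasDerivWithin_le (f' := fun _ => 0) hf
      (fun _ _ => norm_zero.le) hx hy
  rw [zero_mul, norm_le_zero_iff, sub_eq_zero] at hle
  exact hle.symm

theorem hasDerivAt_sq_sub_sq_mul_sq_eq_zero {U W : ℝ → ℝ} {u w c t : ℝ}
    (hU : HasDerivAt U u t) (hW : HasDerivAt W w t)
    (hrel : U t * W t * u = (c ^ 2 - U t ^ 2) * w) :
    HasDerivAt (fun s => (c ^ 2 - U s ^ 2) * W s ^ 2) 0 t := by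
  refine (((hU.fun_pow 2).const_sub (c ^ 2)).mul (hW.fun_pow 2)).congr_deriv ?_
  linear_combination (-2 * W t) * hrel

theorem regime2_conserved_quantity_general
    (cstar hstar Vtot τ : ℝ)
    (I : Set ℝ) (hI : I.OrdConnected) (hτ : τ ∈ I)
    (R U : ℝ → ℝ)
    (hR : ∀ t ∈ I, HasDerivAt R (U t) t)
    (hU : ∀ t ∈ I, DifferentiableAt ℝ U t)
    (hmom : ∀ t ∈ I,
      (Vtot - π * R t ^ 2 * hstar) * deriv U t
        = 2 * π * R t * hstar * (U t ^ 2 - cstar ^ 2))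
    (hV2 : ∀ t ∈ I, Vtot - π * R t ^ 2 * hstar > 0) :
    ∀ t ∈ I,
      (cstar ^ 2 - U t ^ 2) * (Vtot - π * R t ^ 2 * hstar) ^ 2
          = (cstar ^ 2 - U τ ^ 2) * (Vtot - π * R τ ^ 2 * hstar) ^ 2
      ∧ (deriv R t) ^ 2
          = cstar ^ 2
            - (cstar ^ 2 - U τ ^ 2) * (Vtot - π * R τ ^ 2 * hstar) ^ 2
                / (Vtot - π * R t ^ 2 * hstar) ^ 2 := by
  have hderiv (t : ℝ) (ht : t ∈ I) :
      HasDerivAt (fun s => (cstar ^ 2 - U s ^ 2) * (Vtot - π * R s ^ 2 * hstar) ^ 2) 0 t := by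
    refine hasDerivAt_sq_sub_sq_mul_sq_eq_zero (hU t ht).hasDerivAt
      ((((hR t ht).fun_pow 2).const_mul π).mul_const hstar |>.const_sub Vtot) ?_
    linear_combination U t * hmom t ht
  intro t ht
  have hconst := hI.convex.eq_of_hasDerivWithinAt_eq_zero
    (fun s hs => (hderiv s hs).hasDerivWithinAt) ht hτ
  refine ⟨hconst, ?_⟩
  have hV : (Vtot - π * R t ^ 2 * hstar) ^ 2 ≠ 0 := pow_ne_zero 2 (hV2 t ht).ne'
  rw [(hR t ht).deriv, ← hconst, mul_div_cancel_right₀ _ hV]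
  ring

/-- For the Regime-2 rim-lamella system, the quantity
`(c*² − U²)·(V_tot − πR²h*)²` is conserved, equal to its initial value `β²`; and
consequently `(R')² = c*² − β²/(V_tot − πR²h*)²`. -/
theorem regime2_conserved_quantity
    (cstar hstar Vtot τ : ℝ) (hc : cstar > 0) (hh : hstar > 0) (hV : Vtot > 0)
    (I : Set ℝ) (hI : I.OrdConnected) (hτ : τ ∈ I)
    (R U : ℝ → ℝ)
    (hR : ∀ t ∈ I, HasDerivAt R (U t) t)
    (hU : ∀ t ∈ I, DifferentiableAt ℝ U t)
    (hmom : ∀ t ∈ I,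
      (Vtot - π * R t ^ 2 * hstar) * deriv U t
        = 2 * π * R t * hstar * (U t ^ 2 - cstar ^ 2))
    (hU2 : ∀ t ∈ I, cstar ^ 2 - U t ^ 2 > 0)
    (hV2 : ∀ t ∈ I, Vtot - π * R t ^ 2 * hstar > 0) :
    ∀ t ∈ I,
      (cstar ^ 2 - U t ^ 2) * (Vtot - π * R t ^ 2 * hstar) ^ 2
          = (cstar ^ 2 - U τ ^ 2) * (Vtot - π * R τ ^ 2 * hstar) ^ 2
      ∧ (deriv R t) ^ 2
          = cstar ^ 2
            - (cstar ^ 2 - U τ ^ 2) * (Vtot - π * R τ ^ 2 * hstar) ^ 2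
                / (Vtot - π * R t ^ 2 * hstar) ^ 2 :=
  regime2_conserved_quantity_general cstar hstar Vtot τ I hI hτ R U hR hU hmom hV2
end

section
/- Let c*, h*, V_tot be positive constants and let R, U : I → ℝ be differentiable on an interval I with R'(t) = U(t), (V_tot − π·R(t)²·h*)·U'(t) = 2π·R(t)·h*·(U(t)² − c*²), c*² − U(t)² > 0 and V_tot − π·R(t)²·h* > 0 on I. Fix τ ∈ I and set β = √( c*² − U(τ)² ) · ( V_tot − π·R(τ)²·h* ) > 0. Then for every t ∈ I: V_tot − π·R(t)²·h* ≥ β/c*, hence R(t)² ≤ ( V_tot − β/c* ) / (π·h*) ≤ V_tot / (π·h*). In particular the radius in Regime 2 never exceeds √( V_tot / (π·h*) ). -/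
/-!
With `A = V_tot − πR²h*`, the momentum equation makes `(c*² − U²)·A²` a first integral, so it
equals `β²` on all of `I`. Since `c*² − U² ≤ c*²`, this gives `β² ≤ (c*·A)²`, i.e. `A ≥ β/c*`,
and the bounds on `R` are rearrangements of that inequality.
-/

open Real

theorem Set.OrdConnected.eq_of_hasDerivAt_eq_zero {I : Set ℝ} (hI : I.OrdConnected)
    {f : ℝ → ℝ} (hf : ∀ t ∈ I, HasDerivAt f 0 t) {a b : ℝ} (ha : a ∈ I) (hb : b ∈ I) :
    f a = f b := by
  have h := hI.convex.norm_image_sub_le_of_norm_hasDerivWithin_le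
    (fun t ht => (hf t ht).hasDerivWithinAt) (fun _ _ => norm_zero.le) hb ha
  rw [zero_mul, norm_le_zero_iff, sub_eq_zero] at h
  exact h

theorem hasDerivAt_sub_sq_mul_sq_eq_zero {A U : ℝ → ℝ} {u k c t : ℝ}
    (hA : HasDerivAt A (-(k * U t)) t) (hU : HasDerivAt U u t)
    (hmom : A t * u = k * (U t ^ 2 - c ^ 2)) :
    HasDerivAt (fun s => (c ^ 2 - U s ^ 2) * A s ^ 2) 0 t := by
  refine (((hasDerivAt_const t (c ^ 2)).sub (hU.pow 2)).mul (hA.pow 2)).congr_deriv ?_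
  simp only [Pi.sub_apply, Pi.pow_apply]
  linear_combination (-(2 * U t * A t)) * hmom

theorem div_le_of_sub_sq_mul_sq_eq_sq {c u A b : ℝ} (hc : 0 < c) (hA : 0 ≤ A)
    (h : (c ^ 2 - u ^ 2) * A ^ 2 = b ^ 2) : b / c ≤ A := by
  rw [div_le_iff₀' hc]
  refine le_of_sq_le_sq ?_ (mul_nonneg hc.le hA)
  nlinarith [sq_nonneg (u * A)]

theorem regime2_radius_bound_general
    (cstar hstar Vtot τ : ℝ) (hc : cstar > 0) (hh : hstar > 0)
    (I : Set ℝ) (hI : I.OrdConnected) (hτ : τ ∈ I)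
    (R U : ℝ → ℝ)
    (hR : ∀ t ∈ I, HasDerivAt R (U t) t)
    (hU : ∀ t ∈ I, DifferentiableAt ℝ U t)
    (hmom : ∀ t ∈ I,
      (Vtot - π * R t ^ 2 * hstar) * deriv U t
        = 2 * π * R t * hstar * (U t ^ 2 - cstar ^ 2))
    (hU2 : ∀ t ∈ I, cstar ^ 2 - U t ^ 2 > 0)
    (hV2 : ∀ t ∈ I, Vtot - π * R t ^ 2 * hstar > 0) :
    ∀ t ∈ I,
      Vtot - π * R t ^ 2 * hstar
          ≥ Real.sqrt (cstar ^ 2 - U τ ^ 2) * (Vtot - π * R τ ^ 2 * hstar) / cstar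
      ∧ R t ^ 2
          ≤ (Vtot - Real.sqrt (cstar ^ 2 - U τ ^ 2) * (Vtot - π * R τ ^ 2 * hstar) / cstar)
              / (π * hstar)
      ∧ (Vtot - Real.sqrt (cstar ^ 2 - U τ ^ 2) * (Vtot - π * R τ ^ 2 * hstar) / cstar)
              / (π * hstar)
          ≤ Vtot / (π * hstar)
      ∧ R t ≤ Real.sqrt (Vtot / (π * hstar)) := by
  intro t ht
  set A : ℝ → ℝ := fun s => Vtot - π * R s ^ 2 * hstar
  set β := Real.sqrt (cstar ^ 2 - U τ ^ 2) * A τ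
  have hstationary : ∀ s ∈ I, HasDerivAt (fun s => (cstar ^ 2 - U s ^ 2) * A s ^ 2) 0 s :=
    fun s hs => hasDerivAt_sub_sq_mul_sq_eq_zero (k := 2 * π * R s * hstar)
      ((((hR s hs).pow 2).const_mul π |>.mul_const hstar |>.const_sub Vtot).congr_deriv
        (by ring)) (hU s hs).hasDerivAt (hmom s hs)
  have hconserved : (cstar ^ 2 - U t ^ 2) * A t ^ 2 = β ^ 2 := by
    rw [mul_pow, sq_sqrt (hU2 τ hτ).le]
    exact hI.eq_of_hasDerivAt_eq_zero hstationary ht hτ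
  have hA : β / cstar ≤ A t := div_le_of_sub_sq_mul_sq_eq_sq hc (hV2 t ht).le hconserved
  have hπh : 0 < π * hstar := mul_pos pi_pos hh
  have hR2 : R t ^ 2 ≤ (Vtot - β / cstar) / (π * hstar) := by
    rw [le_div_iff₀ hπh]
    linarith
  have hβ : 0 ≤ β / cstar := div_nonneg (mul_nonneg (sqrt_nonneg _) (hV2 τ hτ).le) hc.le
  have hbound : (Vtot - β / cstar) / (π * hstar) ≤ Vtot / (π * hstar) := by
    gcongr
    linarith
  exact ⟨hA, hR2, hbound, le_sqrt_of_sq_le (hR2.trans hbound)⟩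

/-- For the Regime-2 rim-lamella system with conserved quantity
`β = √(c*² − U(τ)²)·(V_tot − πR(τ)²h*) > 0`, one has, for every `t ∈ I`:
`V_tot − πR(t)²h* ≥ β/c*`, hence `R(t)² ≤ (V_tot − β/c*)/(πh*) ≤ V_tot/(πh*)`; in
particular the radius in Regime 2 never exceeds `√(V_tot/(πh*))`. -/
theorem regime2_radius_bound
    (cstar hstar Vtot τ : ℝ) (hc : cstar > 0) (hh : hstar > 0) (hV : Vtot > 0)
    (I : Set ℝ) (hI : I.OrdConnected) (hτ : τ ∈ I)
    (R U : ℝ → ℝ)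
    (hR : ∀ t ∈ I, HasDerivAt R (U t) t)
    (hU : ∀ t ∈ I, DifferentiableAt ℝ U t)
    (hmom : ∀ t ∈ I,
      (Vtot - π * R t ^ 2 * hstar) * deriv U t
        = 2 * π * R t * hstar * (U t ^ 2 - cstar ^ 2))
    (hU2 : ∀ t ∈ I, cstar ^ 2 - U t ^ 2 > 0)
    (hV2 : ∀ t ∈ I, Vtot - π * R t ^ 2 * hstar > 0) :
    ∀ t ∈ I,
      Vtot - π * R t ^ 2 * hstar
          ≥ Real.sqrt (cstar ^ 2 - U τ ^ 2) * (Vtot - π * R τ ^ 2 * hstar) / cstar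
      ∧ R t ^ 2
          ≤ (Vtot - Real.sqrt (cstar ^ 2 - U τ ^ 2) * (Vtot - π * R τ ^ 2 * hstar) / cstar)
              / (π * hstar)
      ∧ (Vtot - Real.sqrt (cstar ^ 2 - U τ ^ 2) * (Vtot - π * R τ ^ 2 * hstar) / cstar)
              / (π * hstar)
          ≤ Vtot / (π * hstar)
      ∧ R t ≤ Real.sqrt (Vtot / (π * hstar)) :=
  regime2_radius_bound_general cstar hstar Vtot τ hc hh I hI hτ R U hR hU hmom hU2 hV2
end

section
/- For k ∈ (0,1) define the dimensionless quarter period T̂₄(k) = ∫_0^{√(1−k)} (1 − r²) / √( (1 − r²)² − k² ) dr. Then T̂₄(k) tends to π/(2√2) as k → 1 from below: lim_{k → 1⁻} T̂₄(k) = π/(2√2). -/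
open Real MeasureTheory Set Filter

/-- Rescaled integrand after substitution `r = √(1-k)·x`. -/
noncomputable def Fk (k x : ℝ) : ℝ :=
  (1 - (1 - k) * x ^ 2) / Real.sqrt ((1 - x ^ 2) * ((1 + k) - (1 - k) * x ^ 2))

lemma Fk_measurable (k : ℝ) : Measurable (Fk k) := by
  unfold Fk
  exact ((measurable_const.sub ((measurable_const.mul (measurable_id.pow_const 2))))).div
    ((measurable_const.sub (measurable_id.pow_const 2)).mul
      (measurable_const.sub (measurable_const.mul (measurable_id.pow_const 2)))).sqrt

/-- The substitution lemma. -/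
lemma subst_eq {k : ℝ} (hk0 : 0 < k) (hk1 : k < 1) :
    (∫ r in (0:ℝ)..Real.sqrt (1 - k),
        (1 - r ^ 2) / Real.sqrt ((1 - r ^ 2) ^ 2 - k ^ 2))
      = ∫ x in (0:ℝ)..1, Fk k x := by
  have h1k : (0:ℝ) ≤ 1 - k := by linarith
  have hc : (0:ℝ) < Real.sqrt (1 - k) := Real.sqrt_pos.2 (by linarith)
  set c := Real.sqrt (1 - k) with hcdef
  have hc2 : c ^ 2 = 1 - k := Real.sq_sqrt h1k
  calc (∫ r in (0:ℝ)..c, (1 - r ^ 2) / Real.sqrt ((1 - r ^ 2) ^ 2 - k ^ 2))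
      = ∫ r in (c * 0)..(c * 1), (1 - r ^ 2) / Real.sqrt ((1 - r ^ 2) ^ 2 - k ^ 2) := by
        norm_num
    _ = c • ∫ x in (0:ℝ)..1, (1 - (c * x) ^ 2) / Real.sqrt ((1 - (c * x) ^ 2) ^ 2 - k ^ 2) :=
        (intervalIntegral.smul_integral_comp_mul_left
          (fun r => (1 - r ^ 2) / Real.sqrt ((1 - r ^ 2) ^ 2 - k ^ 2)) c).symm
    _ = ∫ x in (0:ℝ)..1, c * ((1 - (c * x) ^ 2) / Real.sqrt ((1 - (c * x) ^ 2) ^ 2 - k ^ 2)) := by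
        rw [smul_eq_mul, ← intervalIntegral.integral_const_mul]
    _ = ∫ x in (0:ℝ)..1, Fk k x := by
        apply intervalIntegral.integral_congr
        intro x _
        show c * ((1 - (c * x) ^ 2) / Real.sqrt ((1 - (c * x) ^ 2) ^ 2 - k ^ 2)) = Fk k x
        have hA : (1 - (c * x) ^ 2) = 1 - (1 - k) * x ^ 2 := by
          rw [mul_pow, hc2]
        have hfac : (1 - (1 - k) * x ^ 2) ^ 2 - k ^ 2
            = (1 - k) * ((1 - x ^ 2) * ((1 + k) - (1 - k) * x ^ 2)) := by ring
        rw [hA, hfac, Real.sqrt_mul h1k, ← hcdef]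
        unfold Fk
        rw [mul_div_assoc', mul_div_mul_left _ _ (ne_of_gt hc)]

lemma bound_integrable :
    IntervalIntegrable (fun x : ℝ => (1 - x) ^ (-(1/2) : ℝ)) volume 0 1 := by
  have h := (intervalIntegral.intervalIntegrable_rpow'
    (a := 0) (b := 1) (r := -(1/2)) (by norm_num)).comp_sub_left 1
  norm_num at h
  exact h.symm

lemma den_lower {k x : ℝ} (hk : 1/2 ≤ k) (hk1 : k ≤ 1) (hx0 : 0 ≤ x) (hx1 : x ≤ 1) :
    1 - x ≤ (1 - x ^ 2) * ((1 + k) - (1 - k) * x ^ 2) := by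
  have hS : 1 ≤ (1 + k) - (1 - k) * x ^ 2 := by nlinarith
  have h1 : 0 ≤ 1 - x ^ 2 := by nlinarith
  calc 1 - x ≤ 1 - x ^ 2 := by nlinarith
    _ = (1 - x ^ 2) * 1 := by ring
    _ ≤ (1 - x ^ 2) * ((1 + k) - (1 - k) * x ^ 2) := mul_le_mul_of_nonneg_left hS h1

/-- The key bound: `|Fk k x| ≤ (1-x)^(-1/2)` on `[0,1]` for `k ∈ [1/2,1]`. -/
lemma Fk_bound {k x : ℝ} (hk : 1/2 ≤ k) (hk1 : k ≤ 1) (hx0 : 0 ≤ x) (hx1 : x ≤ 1) :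
    ‖Fk k x‖ ≤ (1 - x) ^ (-(1/2) : ℝ) := by
  have h1x : (0:ℝ) ≤ 1 - x := by linarith
  have hnum0 : 0 ≤ 1 - (1 - k) * x ^ 2 := by nlinarith
  have hnum1 : 1 - (1 - k) * x ^ 2 ≤ 1 := by nlinarith
  have hrw : (1 - x) ^ (-(1/2) : ℝ) = (Real.sqrt (1 - x))⁻¹ := by
    rw [Real.rpow_neg h1x, Real.sqrt_eq_rpow]
  have hFnn : 0 ≤ Fk k x := by
    apply div_nonneg hnum0 (Real.sqrt_nonneg _)
  rw [Real.norm_of_nonneg hFnn, hrw]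
  rcases eq_or_lt_of_le hx1 with h | h
  · subst h
    have hz : Fk k 1 = 0 := by unfold Fk; norm_num
    rw [hz]
    norm_num
  · have hden : Real.sqrt (1 - x) ≤ Real.sqrt ((1 - x ^ 2) * ((1 + k) - (1 - k) * x ^ 2)) :=
      Real.sqrt_le_sqrt (den_lower hk hk1 hx0 hx1)
    have hd0 : 0 < Real.sqrt (1 - x) := Real.sqrt_pos.2 (by linarith)
    unfold Fk
    rw [div_eq_mul_inv, ← one_mul (Real.sqrt (1 - x))⁻¹]
    apply mul_le_mul hnum1 _ (inv_nonneg.2 (Real.sqrt_nonneg _)) zero_le_one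
    exact inv_anti₀ hd0 hden

/-- Value of the limiting integral. -/
lemma limit_integral_value :
    ∫ x in (0:ℝ)..1, 1 / Real.sqrt ((1 - x ^ 2) * 2) = π / (2 * Real.sqrt 2) := by
  have h2 : (0:ℝ) < Real.sqrt 2 := Real.sqrt_pos.2 (by norm_num)
  have hint : IntervalIntegrable (fun x : ℝ => 1 / Real.sqrt ((1 - x ^ 2) * 2)) volume 0 1 := by
    apply bound_integrable.mono_fun
    · exact (Measurable.aestronglyMeasurable (by
        exact (measurable_const.div
          ((measurable_const.sub (measurable_id.pow_const 2)).mul_const 2).sqrt)))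
    · filter_upwards [ae_restrict_mem measurableSet_uIoc] with x hx
      rw [Set.uIoc_of_le (by norm_num : (0:ℝ) ≤ 1)] at hx
      obtain ⟨hx0, hx1⟩ := hx
      have h1x : (0:ℝ) ≤ 1 - x := by linarith
      have hrw : (1 - x) ^ (-(1/2) : ℝ) = (Real.sqrt (1 - x))⁻¹ := by
        rw [Real.rpow_neg h1x, Real.sqrt_eq_rpow]
      have hnn : 0 ≤ 1 / Real.sqrt ((1 - x ^ 2) * 2) :=
        div_nonneg zero_le_one (Real.sqrt_nonneg _)
      rw [Real.norm_of_nonneg hnn, Real.norm_of_nonneg (Real.rpow_nonneg h1x _), hrw]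
      rcases eq_or_lt_of_le hx1 with h | h
      · subst h; norm_num
      · have hle : 1 - x ≤ (1 - x ^ 2) * 2 := by nlinarith
        have hd0 : 0 < Real.sqrt (1 - x) := Real.sqrt_pos.2 (by linarith)
        rw [one_div]
        exact inv_anti₀ hd0 (Real.sqrt_le_sqrt hle)
  have hderiv : ∀ x ∈ Set.Ioo (0:ℝ) 1,
      HasDerivWithinAt (fun x : ℝ => (Real.sqrt 2)⁻¹ * Real.arcsin x)
        (1 / Real.sqrt ((1 - x ^ 2) * 2)) (Set.Ioi x) x := by
    intro x hx
    have h1 : HasDerivAt Real.arcsin (1 / Real.sqrt (1 - x ^ 2)) x :=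
      Real.hasDerivAt_arcsin (by linarith [hx.1]) (ne_of_lt hx.2)
    have h2' : HasDerivAt (fun x : ℝ => (Real.sqrt 2)⁻¹ * Real.arcsin x)
        ((Real.sqrt 2)⁻¹ * (1 / Real.sqrt (1 - x ^ 2))) x := h1.const_mul _
    have heq : (Real.sqrt 2)⁻¹ * (1 / Real.sqrt (1 - x ^ 2))
        = 1 / Real.sqrt ((1 - x ^ 2) * 2) := by
      rw [Real.sqrt_mul (by nlinarith [hx.1, hx.2] : (0:ℝ) ≤ 1 - x ^ 2)]
      have hx2 : 0 < Real.sqrt (1 - x ^ 2) := Real.sqrt_pos.2 (by nlinarith [hx.1, hx.2])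
      field_simp
    rw [← heq]
    exact h2'.hasDerivWithinAt
  have hcont : ContinuousOn (fun x : ℝ => (Real.sqrt 2)⁻¹ * Real.arcsin x) (Set.Icc 0 1) :=
    (continuous_const.mul Real.continuous_arcsin).continuousOn
  rw [intervalIntegral.integral_eq_sub_of_hasDeriv_right_of_le (by norm_num) hcont hderiv hint]
  rw [Real.arcsin_one, Real.arcsin_zero, mul_zero, sub_zero,
    eq_div_iff (by positivity : (2 : ℝ) * Real.sqrt 2 ≠ 0)]
  have hs : Real.sqrt 2 * (Real.sqrt 2)⁻¹ = 1 := mul_inv_cancel₀ (ne_of_gt h2)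
  linear_combination π * hs

/-- The dimensionless quarter period
`T̂₄(k) = ∫_0^{√(1−k)} (1 − r²)/√((1 − r²)² − k²) dr` tends to `π/(2√2)` as
`k → 1⁻`. -/
theorem quarter_period_limit_at_one :
    Filter.Tendsto
      (fun k : ℝ => ∫ r in (0:ℝ)..Real.sqrt (1 - k),
        (1 - r ^ 2) / Real.sqrt ((1 - r ^ 2) ^ 2 - k ^ 2))
      (nhdsWithin 1 (Set.Iio 1))
      (nhds (π / (2 * Real.sqrt 2))) := by
  have hmem : Set.Ioo (1/2 : ℝ) 1 ∈ nhdsWithin 1 (Set.Iio 1) := by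
    apply mem_nhdsWithin.2
    exact ⟨Set.Ioi (1/2), isOpen_Ioi, by norm_num, by
      rintro x ⟨hx1, hx2⟩
      exact ⟨hx1, hx2⟩⟩
  -- dominated convergence
  have hDCT : Filter.Tendsto (fun k : ℝ => ∫ x in (0:ℝ)..1, Fk k x)
      (nhdsWithin 1 (Set.Iio 1))
      (nhds (∫ x in (0:ℝ)..1, 1 / Real.sqrt ((1 - x ^ 2) * 2))) := by
    apply intervalIntegral.tendsto_integral_filter_of_dominated_convergence
      (fun x : ℝ => (1 - x) ^ (-(1/2) : ℝ))
    · exact Filter.Eventually.of_forall fun k => (Fk_measurable k).aestronglyMeasurable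
    · filter_upwards [hmem] with k hk
      apply Filter.Eventually.of_forall
      intro x hx
      rw [Set.uIoc_of_le (by norm_num : (0:ℝ) ≤ 1)] at hx
      exact Fk_bound (le_of_lt hk.1) (le_of_lt hk.2) (le_of_lt hx.1) hx.2
    · exact bound_integrable
    · apply Filter.Eventually.of_forall
      intro x hx
      rw [Set.uIoc_of_le (by norm_num : (0:ℝ) ≤ 1)] at hx
      rcases eq_or_lt_of_le hx.2 with h | h
      · subst h
        have hz : ∀ k, Fk k (1:ℝ) = 0 := by
          intro k; unfold Fk; norm_num
        simp only [hz]
        norm_num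
      · -- x ∈ (0,1): continuity in k
        have hden : (0:ℝ) < (1 - x ^ 2) * 2 := by nlinarith [hx.1]
        have hdenpos : 0 < Real.sqrt ((1 - x ^ 2) * 2) := Real.sqrt_pos.2 hden
        have hnum : Filter.Tendsto (fun k : ℝ => 1 - (1 - k) * x ^ 2) (nhds 1) (nhds 1) :=
          Continuous.tendsto' (by fun_prop) 1 1 (by norm_num)
        have hd : Filter.Tendsto
            (fun k : ℝ => Real.sqrt ((1 - x ^ 2) * ((1 + k) - (1 - k) * x ^ 2)))
            (nhds 1) (nhds (Real.sqrt ((1 - x ^ 2) * 2))) :=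
          Continuous.tendsto' (by fun_prop) 1 _ (by norm_num)
        have hT : Filter.Tendsto
            (fun k : ℝ => (1 - (1 - k) * x ^ 2) /
              Real.sqrt ((1 - x ^ 2) * ((1 + k) - (1 - k) * x ^ 2)))
            (nhdsWithin 1 (Set.Iio 1)) (nhds (1 / Real.sqrt ((1 - x ^ 2) * 2))) :=
          Filter.Tendsto.mono_left (hnum.div hd (ne_of_gt hdenpos)) nhdsWithin_le_nhds
        simpa [Fk] using hT
  have hcong : ∀ᶠ k in nhdsWithin 1 (Set.Iio 1),
      (∫ x in (0:ℝ)..1, Fk k x)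
        = ∫ r in (0:ℝ)..Real.sqrt (1 - k),
            (1 - r ^ 2) / Real.sqrt ((1 - r ^ 2) ^ 2 - k ^ 2) := by
    filter_upwards [hmem] with k hk
    exact (subst_eq (by linarith [hk.1]) hk.2).symm
  rw [← limit_integral_value]
  exact hDCT.congr' hcong
end

section
/- For k ∈ (0,1) define the dimensionless quarter period T̂₄(k) = ∫_0^{√(1−k)} (1 − r²) / √( (1 − r²)² − k² ) dr. Then T̂₄ is monotonically increasing on (0,1), and T̂₄(k) ≥ 1 for all k ∈ (0,1) (the value 1 being the limit of T̂₄(k) as k → 0⁺). -/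
/-!
Substituting `r = √(1 - k) sin θ` turns `T̂₄(k)` into `∫₀^{π/2} (√B - k / √B) dθ` with
`B = cos² θ + k (2 - cos² θ)`. Adding the `θ`-derivative of `sin θ cos θ √B / (2 - cos² θ)`,
which vanishes at both endpoints, rewrites the integrand as `w(θ) (√B + cos² θ / √B)` with
`w = cos² θ / (2 - cos² θ)²`. As `√B ≥ cos θ` grows with `k` and `u ↦ u + c² / u` grows on
`[c, ∞)`, this integrand is increasing in `k` pointwise. By AM-GM it is at least
`2 cos³ θ / (2 - cos² θ)²`, whose integral is `1`, and it exceeds that by at most `√(2k)`.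
-/

open Real Set Filter Topology MeasureTheory intervalIntegral

section AddSqDiv

variable {K : Type*} [Field K] [LinearOrder K] [IsStrictOrderedRing K]

theorem two_mul_le_add_sq_div {c u : K} (hu : 0 < u) : 2 * c ≤ u + c ^ 2 / u := by
  rw [← sub_nonneg, show u + c ^ 2 / u - 2 * c = (u - c) ^ 2 / u by field_simp; ring]
  positivity

theorem add_sq_div_le_add {c u : K} (hc : 0 ≤ c) (hcu : c ≤ u) : u + c ^ 2 / u ≤ u + c := by
  gcongr
  exact div_le_of_le_mul₀ (hc.trans hcu) hc (by nlinarith)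

theorem add_sq_div_lt_add_sq_div {c u v : K} (hc : 0 < c) (hcu : c ≤ u) (huv : u < v) :
    u + c ^ 2 / u < v + c ^ 2 / v := by
  have hu : 0 < u := hc.trans_le hcu
  have hv : 0 < v := hu.trans huv
  have : c ^ 2 < u * v := by nlinarith
  rw [← sub_pos, show v + c ^ 2 / v - (u + c ^ 2 / u) = (v - u) * (u * v - c ^ 2) / (u * v) by
    field_simp; ring]
  exact div_pos (mul_pos (by linarith) (by linarith)) (by positivity)

end AddSqDiv

theorem one_le_two_sub_cos_sq (θ : ℝ) : 1 ≤ 2 - cos θ ^ 2 := by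
  linarith [cos_sq_le_one θ]

namespace QuarterPeriod

noncomputable def quarterPeriod (k : ℝ) : ℝ :=
  ∫ r in (0:ℝ)..√(1 - k), (1 - r ^ 2) / √((1 - r ^ 2) ^ 2 - k ^ 2)

/-- For `r = √(1 - k) sin θ` one has `1 - r² = B - k` and `(1 - r²)² - k² = (1 - k) cos² θ · B`. -/
noncomputable def B (k θ : ℝ) : ℝ := cos θ ^ 2 + k * (2 - cos θ ^ 2)

noncomputable def substIntegrand (k θ : ℝ) : ℝ := √(B k θ) - k / √(B k θ)

noncomputable def corrector (k θ : ℝ) : ℝ := sin θ * cos θ * √(B k θ) / (2 - cos θ ^ 2)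

noncomputable def monoIntegrand (k θ : ℝ) : ℝ :=
  cos θ ^ 2 / (2 - cos θ ^ 2) ^ 2 * (√(B k θ) + cos θ ^ 2 / √(B k θ))

variable {k l θ : ℝ}

theorem B_pos (hk : 0 < k) (θ : ℝ) : 0 < B k θ := by
  unfold B; nlinarith [one_le_two_sub_cos_sq θ, sq_nonneg (cos θ)]

theorem cos_le_sqrt_B (hk : 0 ≤ k) (θ : ℝ) : cos θ ≤ √(B k θ) :=
  (le_abs_self _).trans <| abs_le_sqrt <| by unfold B; nlinarith [one_le_two_sub_cos_sq θ]

theorem sqrt_B_lt_sqrt_B (hk : 0 ≤ k) (hkl : k < l) (θ : ℝ) : √(B k θ) < √(B l θ) := by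
  have h := one_le_two_sub_cos_sq θ
  apply sqrt_lt_sqrt (by unfold B; positivity)
  unfold B; nlinarith

theorem sqrt_B_le (hk : 0 ≤ k) (hc : 0 ≤ cos θ) : √(B k θ) ≤ cos θ + √(2 * k) := by
  rw [sqrt_le_iff]
  refine ⟨by positivity, ?_⟩
  have := sq_sqrt (by positivity : (0:ℝ) ≤ 2 * k)
  unfold B; nlinarith [sqrt_nonneg (2 * k), sq_nonneg (cos θ)]

theorem continuous_sqrt_B (k : ℝ) : Continuous fun θ => √(B k θ) := by
  unfold B; fun_prop

theorem continuous_substIntegrand (hk : 0 < k) : Continuous (substIntegrand k) :=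
  (continuous_sqrt_B k).sub <| continuous_const.div (continuous_sqrt_B k)
    fun θ => (sqrt_pos.2 (B_pos hk θ)).ne'

theorem continuous_monoIntegrand (hk : 0 < k) : Continuous (monoIntegrand k) := by
  have h2 : ∀ θ, (2 - cos θ ^ 2) ^ 2 ≠ 0 := fun θ => by
    have := one_le_two_sub_cos_sq θ; positivity
  have hB : ∀ θ, √(B k θ) ≠ 0 := fun θ => (sqrt_pos.2 (B_pos hk θ)).ne'
  exact (by fun_prop : Continuous fun θ => cos θ ^ 2).div (by fun_prop) h2 |>.mul <|
    (continuous_sqrt_B k).add <| (by fun_prop : Continuous fun θ => cos θ ^ 2).div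
      (continuous_sqrt_B k) hB

theorem mul_cos_mul_integrand_sin (hk : 0 < k) (hk1 : k < 1) (hθ : θ ∈ Ioo 0 (π / 2)) :
    √(1 - k) * cos θ * ((1 - (√(1 - k) * sin θ) ^ 2) /
      √((1 - (√(1 - k) * sin θ) ^ 2) ^ 2 - k ^ 2)) = substIntegrand k θ := by
  have hc : 0 < cos θ := cos_pos_of_mem_Ioo ⟨by linarith [hθ.1, pi_pos], hθ.2⟩
  have ha : 0 < √(1 - k) := sqrt_pos.2 (by linarith)
  have hb := sqrt_pos.2 (B_pos hk θ)
  have hnum : 1 - (√(1 - k) * sin θ) ^ 2 = B k θ - k := by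
    rw [mul_pow, sq_sqrt (by linarith), sin_sq]; unfold B; ring
  have hrad : √((B k θ - k) ^ 2 - k ^ 2) = √(1 - k) * cos θ * √(B k θ) := by
    rw [← sqrt_sq (by positivity : 0 ≤ √(1 - k) * cos θ), ← sqrt_mul (sq_nonneg _), mul_pow,
      sq_sqrt (by linarith)]
    unfold B; ring_nf
  rw [hnum, hrad, substIntegrand, sub_div' hb.ne', ← sq, sq_sqrt (B_pos hk θ).le]
  field_simp

theorem quarterPeriod_eq_integral_substIntegrand (hk : 0 < k) (hk1 : k < 1) :
    quarterPeriod k = ∫ θ in (0:ℝ)..π / 2, substIntegrand k θ := by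
  have hsub := integral_deriv_smul_comp_of_deriv_nonneg
    (f := fun θ => √(1 - k) * sin θ) (f' := fun θ => √(1 - k) * cos θ) (a := 0) (b := π / 2)
    (g := fun r => (1 - r ^ 2) / √((1 - r ^ 2) ^ 2 - k ^ 2)) (by fun_prop)
    (fun θ _ => (hasDerivAt_sin θ).const_mul _) fun θ hθ => ?_
  · simp only [sin_zero, mul_zero, sin_pi_div_two, mul_one] at hsub
    rw [quarterPeriod, ← hsub]
    exact integral_congr_Ioo_of_le (by positivity) fun θ hθ => mul_cos_mul_integrand_sin hk hk1 hθ
  · rw [min_eq_left (by positivity), max_eq_right (by positivity)] at hθ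
    exact mul_nonneg (sqrt_nonneg _) (cos_nonneg_of_mem_Icc ⟨by linarith [hθ.1, pi_pos], hθ.2.le⟩)

theorem hasDerivAt_B (k θ : ℝ) :
    HasDerivAt (B k) (-(2 * (1 - k) * sin θ * cos θ)) θ := by
  have hB : B k = fun t => cos t ^ 2 * (1 - k) + 2 * k := by funext t; unfold B; ring
  rw [hB]
  refine (((hasDerivAt_cos θ).pow 2).mul_const (1 - k) |>.add_const (2 * k)).congr_deriv ?_
  push_cast; ring

theorem hasDerivAt_corrector (hk : 0 < k) (θ : ℝ) :
    HasDerivAt (corrector k) (monoIntegrand k θ - substIntegrand k θ) θ := by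
  have hBθ := B_pos hk θ
  have hb := sqrt_pos.2 hBθ
  have hd := one_le_two_sub_cos_sq θ
  have h := (((hasDerivAt_sin θ).fun_mul (hasDerivAt_cos θ)).fun_mul
    ((hasDerivAt_B k θ).sqrt hBθ.ne')).fun_div
    ((hasDerivAt_cos θ).fun_pow 2 |>.const_sub 2) (by positivity)
  refine h.congr_deriv ?_
  have hb2 := sq_sqrt hBθ.le
  have hs : sin θ ^ 2 = 1 - cos θ ^ 2 := sin_sq θ
  unfold monoIntegrand substIntegrand
  set b := √(B k θ)
  -- with `k` eliminated the identity becomes polynomial in `b`, `cos θ` and `sin θ`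
  have hkb : k = (b ^ 2 - cos θ ^ 2) / (2 - cos θ ^ 2) := by
    rw [hb2]; unfold B; field_simp; ring
  rw [hkb]
  field_simp
  linear_combination (-2 * cos θ ^ 2 - 2 * b ^ 2) * hs

theorem integral_monoIntegrand_eq_integral_substIntegrand (hk : 0 < k) :
    ∫ θ in (0:ℝ)..π / 2, monoIntegrand k θ = ∫ θ in (0:ℝ)..π / 2, substIntegrand k θ := by
  have hmono := (continuous_monoIntegrand hk).intervalIntegrable (μ := volume) 0 (π / 2)
  have hsubst := (continuous_substIntegrand hk).intervalIntegrable (μ := volume) 0 (π / 2)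
  have hcorr : ∫ θ in (0:ℝ)..π / 2, (monoIntegrand k θ - substIntegrand k θ) = 0 := by
    rw [integral_eq_sub_of_hasDerivAt (fun θ _ => hasDerivAt_corrector hk θ) (hmono.sub hsubst)]
    simp [corrector]
  rwa [integral_sub hmono hsubst, sub_eq_zero] at hcorr

theorem quarterPeriod_eq_integral_monoIntegrand (hk : 0 < k) (hk1 : k < 1) :
    quarterPeriod k = ∫ θ in (0:ℝ)..π / 2, monoIntegrand k θ := by
  rw [quarterPeriod_eq_integral_substIntegrand hk hk1,
    integral_monoIntegrand_eq_integral_substIntegrand hk]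

theorem monoIntegrand_lt_monoIntegrand (hk : 0 ≤ k) (hkl : k < l) (hc : 0 < cos θ) :
    monoIntegrand k θ < monoIntegrand l θ := by
  have := one_le_two_sub_cos_sq θ
  exact mul_lt_mul_of_pos_left
    (add_sq_div_lt_add_sq_div hc (cos_le_sqrt_B hk θ) (sqrt_B_lt_sqrt_B hk hkl θ))
    (by positivity)

theorem strictMonoOn_quarterPeriod : StrictMonoOn quarterPeriod (Ioo 0 1) := by
  intro k hk l hl hkl
  rw [quarterPeriod_eq_integral_monoIntegrand hk.1 hk.2,
    quarterPeriod_eq_integral_monoIntegrand hl.1 hl.2, ← sub_pos,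
    ← integral_sub ((continuous_monoIntegrand hl.1).intervalIntegrable _ _)
      ((continuous_monoIntegrand hk.1).intervalIntegrable _ _)]
  refine intervalIntegral_pos_of_pos_on
    (((continuous_monoIntegrand hl.1).sub (continuous_monoIntegrand hk.1)).intervalIntegrable _ _)
    (fun θ hθ => sub_pos.2 <| monoIntegrand_lt_monoIntegrand hk.1.le hkl <|
      cos_pos_of_mem_Ioo ⟨by linarith [hθ.1, pi_pos], hθ.2⟩) (by positivity)

theorem continuous_two_mul_cos_pow_three_div :
    Continuous fun θ => 2 * cos θ ^ 3 / (2 - cos θ ^ 2) ^ 2 := by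
  fun_prop (disch := intro θ; have := one_le_two_sub_cos_sq θ; positivity)

theorem integral_two_mul_cos_pow_three_div :
    ∫ θ in (0:ℝ)..π / 2, 2 * cos θ ^ 3 / (2 - cos θ ^ 2) ^ 2 = 1 := by
  have hderiv (θ : ℝ) : HasDerivAt (fun t => 2 * sin t / (1 + sin t ^ 2))
      (2 * cos θ ^ 3 / (2 - cos θ ^ 2) ^ 2) θ := by
    have h := ((hasDerivAt_sin θ).const_mul 2).fun_div ((hasDerivAt_sin θ).fun_pow 2 |>.const_add 1)
      (by positivity)
    refine h.congr_deriv ?_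
    rw [show cos θ ^ 3 = cos θ * (1 - sin θ ^ 2) by rw [← cos_sq']; ring,
      show 2 - cos θ ^ 2 = 1 + sin θ ^ 2 by rw [cos_sq']; ring]
    push_cast
    ring
  rw [integral_eq_sub_of_hasDerivAt (fun θ _ => hderiv θ)
    (continuous_two_mul_cos_pow_three_div.intervalIntegrable _ _)]
  norm_num

theorem two_mul_cos_pow_three_div_le_monoIntegrand (hk : 0 < k) (θ : ℝ) :
    2 * cos θ ^ 3 / (2 - cos θ ^ 2) ^ 2 ≤ monoIntegrand k θ :=
  calc 2 * cos θ ^ 3 / (2 - cos θ ^ 2) ^ 2 = cos θ ^ 2 / (2 - cos θ ^ 2) ^ 2 * (2 * cos θ) := by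
        ring
    _ ≤ monoIntegrand k θ :=
      mul_le_mul_of_nonneg_left (two_mul_le_add_sq_div (sqrt_pos.2 (B_pos hk θ))) (by positivity)

theorem monoIntegrand_le (hk : 0 ≤ k) (hc : 0 ≤ cos θ) :
    monoIntegrand k θ ≤ 2 * cos θ ^ 3 / (2 - cos θ ^ 2) ^ 2 + √(2 * k) := by
  have hd := one_le_two_sub_cos_sq θ
  have hw : cos θ ^ 2 / (2 - cos θ ^ 2) ^ 2 ≤ 1 :=
    div_le_one_of_le₀ (by nlinarith [cos_sq_le_one θ]) (by positivity)
  calc monoIntegrand k θ ≤ cos θ ^ 2 / (2 - cos θ ^ 2) ^ 2 * (cos θ + √(2 * k) + cos θ) :=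
        mul_le_mul_of_nonneg_left ((add_sq_div_le_add hc (cos_le_sqrt_B hk θ)).trans
          (by linarith [sqrt_B_le hk hc])) (by positivity)
    _ = 2 * cos θ ^ 3 / (2 - cos θ ^ 2) ^ 2 + cos θ ^ 2 / (2 - cos θ ^ 2) ^ 2 * √(2 * k) := by
        ring
    _ ≤ 2 * cos θ ^ 3 / (2 - cos θ ^ 2) ^ 2 + √(2 * k) := by
        gcongr; exact mul_le_of_le_one_left (sqrt_nonneg _) hw

theorem one_le_quarterPeriod (hk : 0 < k) (hk1 : k < 1) : 1 ≤ quarterPeriod k := by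
  rw [quarterPeriod_eq_integral_monoIntegrand hk hk1, ← integral_two_mul_cos_pow_three_div]
  exact integral_mono_on (by positivity)
    (continuous_two_mul_cos_pow_three_div.intervalIntegrable _ _)
    ((continuous_monoIntegrand hk).intervalIntegrable _ _)
    fun θ _ => two_mul_cos_pow_three_div_le_monoIntegrand hk θ

theorem quarterPeriod_le (hk : 0 < k) (hk1 : k < 1) : quarterPeriod k ≤ 1 + π / 2 * √(2 * k) := by
  have hint := continuous_two_mul_cos_pow_three_div.intervalIntegrable (μ := volume) 0 (π / 2)
  rw [quarterPeriod_eq_integral_monoIntegrand hk hk1]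
  calc ∫ θ in (0:ℝ)..π / 2, monoIntegrand k θ
      ≤ ∫ θ in (0:ℝ)..π / 2, (2 * cos θ ^ 3 / (2 - cos θ ^ 2) ^ 2 + √(2 * k)) :=
        integral_mono_on (by positivity) ((continuous_monoIntegrand hk).intervalIntegrable _ _)
          (hint.add intervalIntegrable_const) fun θ hθ => monoIntegrand_le hk.le <|
            cos_nonneg_of_mem_Icc ⟨by linarith [hθ.1, pi_pos], hθ.2⟩
    _ = 1 + π / 2 * √(2 * k) := by
        rw [integral_add hint intervalIntegrable_const, integral_two_mul_cos_pow_three_div,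
          intervalIntegral.integral_const, smul_eq_mul, sub_zero]

theorem tendsto_quarterPeriod_nhdsGT_zero : Tendsto quarterPeriod (𝓝[>] 0) (𝓝 1) := by
  have hupper : Tendsto (fun k => 1 + π / 2 * √(2 * k)) (𝓝[>] 0) (𝓝 1) := by
    have h : Continuous fun k : ℝ => 1 + π / 2 * √(2 * k) := by fun_prop
    simpa using (h.tendsto 0).mono_left nhdsWithin_le_nhds
  have hmem : ∀ᶠ k in 𝓝[>] (0:ℝ), k ∈ Ioo 0 1 := Ioo_mem_nhdsGT one_pos
  exact tendsto_of_tendsto_of_tendsto_of_le_of_le' tendsto_const_nhds hupper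
    (hmem.mono fun k hk => one_le_quarterPeriod hk.1 hk.2)
    (hmem.mono fun k hk => quarterPeriod_le hk.1 hk.2)

end QuarterPeriod

/-- The dimensionless quarter period
`T̂₄(k) = ∫_0^{√(1−k)} (1 − r²)/√((1 − r²)² − k²) dr` is monotonically increasing on
`(0,1)` and satisfies `T̂₄(k) ≥ 1` for all `k ∈ (0,1)`, the value `1` being the limit
of `T̂₄(k)` as `k → 0⁺`. -/
theorem quarter_period_monotone :
    StrictMonoOn
      (fun k : ℝ => ∫ r in (0:ℝ)..Real.sqrt (1 - k),
        (1 - r ^ 2) / Real.sqrt ((1 - r ^ 2) ^ 2 - k ^ 2))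
      (Set.Ioo 0 1)
    ∧ (∀ k ∈ Set.Ioo (0:ℝ) 1,
        1 ≤ ∫ r in (0:ℝ)..Real.sqrt (1 - k),
          (1 - r ^ 2) / Real.sqrt ((1 - r ^ 2) ^ 2 - k ^ 2))
    ∧ Filter.Tendsto
        (fun k : ℝ => ∫ r in (0:ℝ)..Real.sqrt (1 - k),
          (1 - r ^ 2) / Real.sqrt ((1 - r ^ 2) ^ 2 - k ^ 2))
        (nhdsWithin 0 (Set.Ioi 0)) (nhds 1) :=
  ⟨QuarterPeriod.strictMonoOn_quarterPeriod,
    fun _ hk => QuarterPeriod.one_le_quarterPeriod hk.1 hk.2,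
    QuarterPeriod.tendsto_quarterPeriod_nhdsGT_zero⟩
end
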